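/- arXiv:2510.03373 — 3 statements merged into one kernel-verified Lean document; each statement's English description precedes it below -/
import Mathlib

section
/- Let P be a Perron system and let 𝔓 be the associated family of unions of consecutive P-cylinders. Then every half-open interval U = (x₁, x₂] with 0 ≤ x₁ < x₂ ≤ 1 can be covered by at most three sets from 𝔓, each of diameter at most x₂ − x₁. -/
open Set Filter MeasureTheory
open scoped ENNReal

noncomputable section

/-- A Perron system `P = (φ_n)`: `φ₀ = φ []` and `φ_n(c₁,…,c_n) = φ [c₁,…,c_n]`;
all values are positive integers. -/
structure PerronSystem where
  φ : List ℕ → ℕ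
  φ_pos : ∀ l, 0 < φ l

/-- `(c₁−1)c₁⋯(c_n−1)c_n` (0-based indexing: `c 0 = c₁`). -/
def qprod (c : ℕ → ℕ) (n : ℕ) : ℝ :=
  ∏ i ∈ Finset.range n, (((c i : ℝ) - 1) * (c i : ℝ))

namespace PerronSystem

variable (P : PerronSystem)

/-- `r P c 0 = φ₀` and `r P c n = φ_n(c₁,…,c_n)`. -/
def r (c : ℕ → ℕ) (n : ℕ) : ℕ := P.φ (List.ofFn fun j : Fin n => c j)

/-- The word `c₁ … c_k` is P-admissible: `c_i ≥ φ_{i−1}(c₁,…,c_{i−1}) + 1`. -/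
def AdmissibleUpTo (c : ℕ → ℕ) (k : ℕ) : Prop := ∀ i < k, P.r c i + 1 ≤ c i

/-- The infinite digit sequence `c` is P-admissible. -/
def Admissible (c : ℕ → ℕ) : Prop := ∀ i, P.r c i + 1 ≤ c i

/-- `r₀ r₁ ⋯ r_{n−1}`. -/
def rprod (c : ℕ → ℕ) (n : ℕ) : ℝ := ∏ i ∈ Finset.range n, (P.r c i : ℝ)

/-- Diameter `D_k = r₀⋯r_{k−1} / ((c₁−1)c₁⋯(c_k−1)c_k)` of the cylinder with base `c₁…c_k`. -/
def D (c : ℕ → ℕ) (k : ℕ) : ℝ := P.rprod c k / qprod c k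

/-- `S_k`, the infimum of the positive Perron cylinder with base `c₁…c_k`. -/
def S (c : ℕ → ℕ) (k : ℕ) : ℝ :=
  ∑ n ∈ Finset.range k, P.rprod c (n + 1) / (qprod c n * (c n : ℝ))

/-- The positive Perron cylinder `Δ^P_{c₁…c_k} = (S_k, S_k + D_k]`. -/
def cyl (c : ℕ → ℕ) (k : ℕ) : Set ℝ := Ioc (P.S c k) (P.S c k + P.D c k)

/-- `A_k = ∑_{n=0}^{k−1} (−1)^n r₀⋯r_n / ((c₁−1)c₁⋯(c_n−1)c_n (c_{n+1}−1))`. -/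
def A (c : ℕ → ℕ) (k : ℕ) : ℝ :=
  ∑ n ∈ Finset.range k, (-1 : ℝ) ^ n * P.rprod c (n + 1) / (qprod c n * ((c n : ℝ) - 1))

/-- The second endpoint `A_k + (−1)^k D_k` of the interval `I_{c₁…c_k}`. -/
def altEnd (c : ℕ → ℕ) (k : ℕ) : ℝ := P.A c k + (-1 : ℝ) ^ k * P.D c k

/-- The countable set `IS^{P⁻}` of endpoints of the intervals `I_{c₁…c_k}`
(the word of length `0` contributes the endpoints `0` and `1`). -/
def IS : Set ℝ :=
  {x | ∃ (c : ℕ → ℕ) (k : ℕ), P.AdmissibleUpTo c k ∧ (x = P.A c k ∨ x = P.altEnd c k)}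

/-- The alternating Perron cylinder `Δ^{P⁻}_{c₁…c_k} = I_{c₁…c_k} \ IS^{P⁻}`. -/
def altCyl (c : ℕ → ℕ) (k : ℕ) : Set ℝ :=
  Ioo (min (P.A c k) (P.altEnd c k)) (max (P.A c k) (P.altEnd c k)) \ P.IS

/-- The family `𝔓` of all unions of consecutive positive Perron cylinders of the same
rank contained in a single cylinder of the previous rank. -/
def famP : Set (Set ℝ) :=
  {U | ∃ (c : ℕ → ℕ) (k n : ℕ), P.AdmissibleUpTo c k ∧ P.r c k + 1 ≤ n ∧
      ((∃ m, n ≤ m ∧ U = ⋃ i ∈ Finset.Icc n m, P.cyl (Function.update c k i) (k + 1)) ∨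
        U = ⋃ i ∈ {j : ℕ | n ≤ j}, P.cyl (Function.update c k i) (k + 1))}

/-- The subfamily `𝔓₁ ⊆ 𝔓` of finite unions. -/
def famP1 : Set (Set ℝ) :=
  {U | ∃ (c : ℕ → ℕ) (k n m : ℕ), P.AdmissibleUpTo c k ∧ P.r c k + 1 ≤ n ∧ n ≤ m ∧
      U = ⋃ i ∈ Finset.Icc n m, P.cyl (Function.update c k i) (k + 1)}

/-- The family `𝔓⁻` of all unions of consecutive alternating Perron cylinders of the same
rank contained in a single cylinder of the previous rank. -/
def famAlt : Set (Set ℝ) :=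
  {U | ∃ (c : ℕ → ℕ) (k n : ℕ), P.AdmissibleUpTo c k ∧ P.r c k + 1 ≤ n ∧
      ((∃ m, n ≤ m ∧ U = ⋃ i ∈ Finset.Icc n m, P.altCyl (Function.update c k i) (k + 1)) ∨
        U = ⋃ i ∈ {j : ℕ | n ≤ j}, P.altCyl (Function.update c k i) (k + 1))}

/-- The subfamily `𝔓₁⁻ ⊆ 𝔓⁻` of finite unions. -/
def famAlt1 : Set (Set ℝ) :=
  {U | ∃ (c : ℕ → ℕ) (k n m : ℕ), P.AdmissibleUpTo c k ∧ P.r c k + 1 ≤ n ∧ n ≤ m ∧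
      U = ⋃ i ∈ Finset.Icc n m, P.altCyl (Function.update c k i) (k + 1)}

/-- The value `Δ^P_c` of the positive Perron expansion with digit sequence `c`. -/
def posValue (c : ℕ → ℕ) : ℝ :=
  ∑' n : ℕ, P.rprod c (n + 1) / (qprod c n * (c n : ℝ))

/-- The value `Δ^{P⁻}_c` of the alternating Perron expansion with digit sequence `c`. -/
def altValue (c : ℕ → ℕ) : ℝ :=
  ∑' n : ℕ, (-1 : ℝ) ^ n * P.rprod c (n + 1) / (qprod c n * ((c n : ℝ) - 1))

end PerronSystem

/-- The Hausdorff `α`-dimensional measure of `E` with respect to a family of coverings `Φ`. -/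
def Hfam (Φ : Set (Set ℝ)) (α : ℝ) (E : Set ℝ) : ℝ≥0∞ :=
  ⨆ (ε : ℝ) (_ : 0 < ε),
    ⨅ (f : ℕ → Set ℝ) (_ : E ⊆ ⋃ n, f n) (_ : ∀ n, f n ∈ Φ)
      (_ : ∀ n, EMetric.diam (f n) ≤ ENNReal.ofReal ε),
      ∑' n : ℕ, EMetric.diam (f n) ^ α

/-- The Hausdorff dimension of `E` with respect to a family of coverings `Φ`:
`inf {α > 0 : H^α(E, Φ) = 0}` (equal to `∞` if no such `α` exists). -/
def dimFam (Φ : Set (Set ℝ)) (E : Set ℝ) : ℝ≥0∞ :=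
  ⨅ (α : ℝ) (_ : 0 < α) (_ : Hfam Φ α E = 0), ENNReal.ofReal α

end

/-! The children of a cylinder shrink towards its left end point.  Hence, if `t` is the right end
point of a union of consecutive children of a cylinder around `x`, descending along the cylinders
of `x` until `x` leaves the child adjacent to `t` covers `(x, t]` by the child containing `x` and
the union of the children between it and `t`, the former no longer than the latter, which is at
most `t - x`.  Dually, if `s` is the left end point of a cylinder containing `x`, then `(s, x]` is
covered by the child containing `x` and the union of all the children below it, the former no
longer than the latter, which is shorter than `x - s`.  Now split `(x₁, x₂]` at the left end point
`s` of the child containing `x₂` of the smallest cylinder containing `(x₁, x₂]`: the longer of the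
halves `(x₁, s]` and `(s, x₂]` gets its two pieces, the shorter one their union, which is at most
twice as long as that half. -/

open Function

section IntervalCovers

variable {F : Set (Set ℝ)} {x₁ x₂ s : ℝ}

def CoverableByThree (F : Set (Set ℝ)) (x₁ x₂ : ℝ) : Prop :=
  ∃ U₁ U₂ U₃ : Set ℝ, U₁ ∈ F ∧ U₂ ∈ F ∧ U₃ ∈ F ∧ Ioc x₁ x₂ ⊆ U₁ ∪ U₂ ∪ U₃ ∧
    Metric.ediam U₁ ≤ ENNReal.ofReal (x₂ - x₁) ∧ Metric.ediam U₂ ≤ ENNReal.ofReal (x₂ - x₁) ∧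
    Metric.ediam U₃ ≤ ENNReal.ofReal (x₂ - x₁)

def CoverEndingAt (F : Set (Set ℝ)) (x t : ℝ) : Prop :=
  ∃ a b, a < x ∧ x ≤ b ∧ b - a ≤ t - b ∧ Ioc a b ∈ F ∧ Ioc b t ∈ F ∧ Ioc a t ∈ F

def CoverStartingAt (F : Set (Set ℝ)) (s x : ℝ) : Prop :=
  ∃ b d, b < x ∧ x ≤ d ∧ d - b ≤ b - s ∧ Ioc s b ∈ F ∧ Ioc b d ∈ F ∧ Ioc s d ∈ F

lemma ediam_Ioc_le_ofReal {a b δ : ℝ} (h : b - a ≤ δ) :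
    Metric.ediam (Ioc a b) ≤ ENNReal.ofReal δ :=
  (Real.ediam_Ioc a b).trans_le (ENNReal.ofReal_le_ofReal h)

lemma CoverStartingAt.coverableByThree (h : CoverStartingAt F x₁ x₂) :
    CoverableByThree F x₁ x₂ := by
  obtain ⟨b, d, hbx, hxd, hdb, hsb, hbd, -⟩ := h
  refine ⟨_, _, _, hsb, hbd, hsb, fun y hy => Or.inl (Ioc_subset_Ioc_union_Ioc
    (Ioc_subset_Ioc_right hxd hy)), ?_, ?_, ?_⟩ <;> exact ediam_Ioc_le_ofReal (by linarith)

lemma CoverEndingAt.coverableByThree (hL : CoverEndingAt F x₁ s) (hR : CoverStartingAt F s x₂) :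
    CoverableByThree F x₁ x₂ := by
  obtain ⟨a, b, hax, hxb, hba, hab, hbs, has⟩ := hL
  obtain ⟨b', d, hbx, hxd, hdb, hsb, hbd, hsd⟩ := hR
  have hcover : Ioc x₁ x₂ ⊆ Ioc a s ∪ Ioc s d :=
    (Ioc_subset_Ioc hax.le hxd).trans Ioc_subset_Ioc_union_Ioc
  rcases le_or_gt (x₂ - s) (s - x₁) with hshort | hshort
  · refine ⟨_, _, _, hab, hbs, hsd, hcover.trans (union_subset_union_left _
      Ioc_subset_Ioc_union_Ioc), ?_, ?_, ?_⟩ <;> exact ediam_Ioc_le_ofReal (by linarith)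
  · refine ⟨_, _, _, has, hsb, hbd, fun y hy => ?_, ?_, ?_, ?_⟩
    · rw [union_assoc]
      exact union_subset_union_right _ Ioc_subset_Ioc_union_Ioc (hcover hy)
    all_goals exact ediam_Ioc_le_ofReal (by linarith)

end IntervalCovers

lemma exists_div_succ_lt_le {A s x : ℝ} {n : ℕ} (hsx : s < x) (hx : x ≤ s + A / n) :
    ∃ i, n ≤ i ∧ s + A / (i + 1) < x ∧ x ≤ s + A / i := by
  have hn : (0 : ℝ) < n := by
    rcases (Nat.zero_le n).eq_or_lt with rfl | hn
    · simp only [CharP.cast_eq_zero, div_zero, add_zero] at hx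
      linarith
    · exact_mod_cast hn
  have hA : 0 < A := (div_pos_iff_of_pos_right hn).1 (by linarith)
  have hxs : 0 < x - s := by linarith
  have hnx : (n : ℝ) ≤ A / (x - s) := by
    rw [le_div_iff₀ hxs, ← le_div_iff₀' hn]
    linarith
  have hi : (0 : ℝ) < ⌊A / (x - s)⌋₊ := hn.trans_le (Nat.cast_le.2 (Nat.le_floor hnx))
  refine ⟨⌊A / (x - s)⌋₊, Nat.le_floor hnx, ?_, ?_⟩
  · have := Nat.lt_floor_add_one (A / (x - s))
    rw [div_lt_iff₀ hxs, ← div_lt_iff₀' (by positivity)] at this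
    linarith
  · have := Nat.floor_le (div_pos hA hxs).le
    rw [le_div_iff₀ hxs, ← le_div_iff₀' hi] at this
    linarith

lemma div_mul_succ_le_div_half {A r i : ℝ} (hA : 0 ≤ A) (hr : 1 ≤ r) (hri : r ≤ i) :
    A / (i * (i + 1)) ≤ A / r / 2 := by
  rw [div_div]
  exact div_le_div_of_nonneg_left hA (by positivity) (by nlinarith)

lemma div_sub_div_succ {A i : ℝ} (hi : 0 < i) : A / i - A / (i + 1) = A / (i * (i + 1)) := by
  field_simp
  ring

lemma div_sub_div_succ_le_div_succ {A i : ℝ} (hA : 0 ≤ A) (hi : 1 ≤ i) :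
    A / i - A / (i + 1) ≤ A / (i + 1) := by
  rw [div_sub_div_succ (by linarith)]
  exact div_le_div_of_nonneg_left hA (by linarith) (by nlinarith)

lemma div_sub_div_succ_le_div_sub_div {A n i : ℝ} (hA : 0 ≤ A) (hn : 1 ≤ n) (hni : n + 1 ≤ i) :
    A / i - A / (i + 1) ≤ A / n - A / i :=
  calc A / i - A / (i + 1) = A / (i * (i + 1)) := div_sub_div_succ (by linarith)
    _ ≤ A / (n * (n + 1)) :=
      div_le_div_of_nonneg_left hA (by positivity) (by nlinarith)
    _ = A / n - A / (n + 1) := (div_sub_div_succ (by linarith)).symm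
    _ ≤ A / n - A / i := by gcongr

lemma qprod_update_of_le {c : ℕ → ℕ} {k n : ℕ} (i : ℕ) (hn : n ≤ k) :
    qprod (update c k i) n = qprod c n :=
  Finset.prod_congr rfl fun j hj => by
    rw [update_of_ne (by have := Finset.mem_range.1 hj; omega)]

namespace PerronSystem

variable (P : PerronSystem) {c : ℕ → ℕ} {k : ℕ}

/-- The children of the cylinder with base `c₁…c_k` are the intervals
`(S_k + scale / i, S_k + scale / (i - 1)]` for the digits `i ≥ r_k + 1`. -/
noncomputable def scale (c : ℕ → ℕ) (k : ℕ) : ℝ := P.rprod c (k + 1) / qprod c k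

lemma one_le_r (c : ℕ → ℕ) (n : ℕ) : 1 ≤ P.r c n := P.φ_pos _

lemma r_update_of_le {j : ℕ} (i : ℕ) (hj : j ≤ k) : P.r (update c k i) j = P.r c j := by
  unfold r
  congr 1
  exact List.ofFn_inj.2 (funext fun l => update_of_ne (by omega) _ _)

lemma rprod_update_of_le {n : ℕ} (i : ℕ) (hn : n ≤ k + 1) :
    P.rprod (update c k i) n = P.rprod c n :=
  Finset.prod_congr rfl fun j hj => by
    rw [P.r_update_of_le i (by have := Finset.mem_range.1 hj; omega)]

lemma admissibleUpTo_update (hc : P.AdmissibleUpTo c k) {i : ℕ} (hi : P.r c k + 1 ≤ i) :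
    P.AdmissibleUpTo (update c k i) (k + 1) := by
  intro j hj
  rw [P.r_update_of_le i (by omega)]
  rcases (Nat.lt_succ_iff.1 hj).lt_or_eq with hjk | rfl
  · rw [update_of_ne hjk.ne]
    exact hc j hjk
  · rwa [update_self]

lemma scale_pos (hc : P.AdmissibleUpTo c k) : 0 < P.scale c k := by
  refine div_pos (Finset.prod_pos fun j _ => by exact_mod_cast P.φ_pos _)
    (Finset.prod_pos fun j hj => ?_)
  have : (2 : ℝ) ≤ c j := by
    have := hc j (Finset.mem_range.1 hj)
    have := P.one_le_r c j
    exact_mod_cast (by omega : 2 ≤ c j)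
  nlinarith

lemma D_eq_scale_div (c : ℕ → ℕ) (k : ℕ) : P.D c k = P.scale c k / P.r c k := by
  have : (P.r c k : ℝ) ≠ 0 := by exact_mod_cast (P.φ_pos _).ne'
  simp only [D, scale, rprod, Finset.prod_range_succ]
  rw [mul_div_right_comm, mul_div_cancel_right₀ _ this]

lemma S_update_succ (c : ℕ → ℕ) (k i : ℕ) :
    P.S (update c k (i + 1)) (k + 1) = P.S c k + P.scale c k / (i + 1) := by
  rw [S, Finset.sum_range_succ, update_self, P.rprod_update_of_le _ le_rfl,
    qprod_update_of_le _ le_rfl, scale, div_div, S]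
  push_cast
  congr 1
  refine Finset.sum_congr rfl fun n hn => ?_
  have hnk := Finset.mem_range.1 hn
  rw [P.rprod_update_of_le _ (by omega), qprod_update_of_le _ hnk.le, update_of_ne hnk.ne]

lemma D_update_succ (c : ℕ → ℕ) (k i : ℕ) :
    P.D (update c k (i + 1)) (k + 1) = P.scale c k / (i * (i + 1)) := by
  rw [D, P.rprod_update_of_le _ le_rfl, qprod, Finset.prod_range_succ, update_self, ← qprod,
    qprod_update_of_le _ le_rfl, scale, div_div]
  push_cast
  ring_nf

lemma S_add_D_update_succ (c : ℕ → ℕ) (k : ℕ) {i : ℕ} (hi : i ≠ 0) :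
    P.S (update c k (i + 1)) (k + 1) + P.D (update c k (i + 1)) (k + 1) =
      P.S c k + P.scale c k / i := by
  have : (i : ℝ) ≠ 0 := by exact_mod_cast hi
  rw [P.S_update_succ, P.D_update_succ]
  field_simp
  ring

lemma cyl_update_succ (c : ℕ → ℕ) (k : ℕ) {i : ℕ} (hi : i ≠ 0) :
    P.cyl (update c k (i + 1)) (k + 1) =
      Ioc (P.S c k + P.scale c k / (i + 1)) (P.S c k + P.scale c k / i) := by
  rw [cyl, P.S_add_D_update_succ c k hi, P.S_update_succ]

lemma Ioc_mem_famP (hc : P.AdmissibleUpTo c k) {n m : ℕ} (hn : P.r c k ≤ n) (hnm : n < m) :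
    Ioc (P.S c k + P.scale c k / m) (P.S c k + P.scale c k / n) ∈ P.famP := by
  have hA := P.scale_pos hc
  have hr := P.one_le_r c k
  have hn₀ : (0 : ℝ) < n := by exact_mod_cast (by omega : 0 < n)
  refine ⟨c, k, n + 1, hc, by omega, Or.inl ⟨m, hnm, ?_⟩⟩
  ext x
  simp only [mem_iUnion, Finset.mem_Icc, exists_prop]
  constructor
  · rintro ⟨hx₁, hx₂⟩
    have hm : 0 < P.scale c k / m := div_pos hA (by exact_mod_cast (by omega : 0 < m))
    obtain ⟨i, hni, hx, hix⟩ := exists_div_succ_lt_le (by linarith) hx₂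
    have hi : i ≠ 0 := by omega
    refine ⟨i + 1, ⟨by omega, ?_⟩, by rw [P.cyl_update_succ c k hi]; exact ⟨hx, hix⟩⟩
    by_contra! him
    have : P.scale c k / i ≤ P.scale c k / m :=
      div_le_div_of_nonneg_left hA.le (by exact_mod_cast (by omega : 0 < m))
        (by exact_mod_cast (by omega : m ≤ i))
    linarith
  · rintro ⟨d, ⟨hnd, hdm⟩, hx⟩
    obtain ⟨i, rfl⟩ : ∃ i, d = i + 1 := ⟨d - 1, by omega⟩
    rw [P.cyl_update_succ c k (by omega)] at hx
    have hmi : P.scale c k / m ≤ P.scale c k / (i + 1) :=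
      div_le_div_of_nonneg_left hA.le (by positivity) (by exact_mod_cast hdm)
    have hin : P.scale c k / i ≤ P.scale c k / n :=
      div_le_div_of_nonneg_left hA.le hn₀ (by exact_mod_cast (by omega : n ≤ i))
    exact ⟨by linarith [hx.1], by linarith [hx.2]⟩

lemma Ioc_left_mem_famP (hc : P.AdmissibleUpTo c k) {n : ℕ} (hn : P.r c k ≤ n) :
    Ioc (P.S c k) (P.S c k + P.scale c k / n) ∈ P.famP := by
  have hA := P.scale_pos hc
  have hr := P.one_le_r c k
  have hn₀ : (0 : ℝ) < n := by exact_mod_cast (by omega : 0 < n)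
  refine ⟨c, k, n + 1, hc, by omega, Or.inr ?_⟩
  ext x
  simp only [mem_iUnion, mem_ofPred_eq, exists_prop]
  constructor
  · rintro ⟨hx₁, hx₂⟩
    obtain ⟨i, hni, hx, hix⟩ := exists_div_succ_lt_le hx₁ hx₂
    exact ⟨i + 1, by omega, by rw [P.cyl_update_succ c k (by omega)]; exact ⟨hx, hix⟩⟩
  · rintro ⟨d, hnd, hx⟩
    obtain ⟨i, rfl⟩ : ∃ i, d = i + 1 := ⟨d - 1, by omega⟩
    rw [P.cyl_update_succ c k (by omega)] at hx
    have hi : 0 < P.scale c k / (i + 1) := by positivity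
    have hin : P.scale c k / i ≤ P.scale c k / n :=
      div_le_div_of_nonneg_left hA.le hn₀ (by exact_mod_cast (by omega : n ≤ i))
    exact ⟨by linarith [hx.1], by linarith [hx.2]⟩

lemma coverStartingAt_famP (hc : P.AdmissibleUpTo c k) {x : ℝ} (hx : x ∈ P.cyl c k) :
    CoverStartingAt P.famP (P.S c k) x := by
  obtain ⟨hSx, hxD⟩ := hx
  rw [D_eq_scale_div] at hxD
  obtain ⟨i, hri, hx, hxi⟩ := exists_div_succ_lt_le hSx hxD
  have hi : (1 : ℝ) ≤ i := by exact_mod_cast (P.one_le_r c k).trans hri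
  have hlower : Ioc (P.S c k) (P.S c k + P.scale c k / (i + 1)) ∈ P.famP := by
    exact_mod_cast P.Ioc_left_mem_famP hc (n := i + 1) (by omega)
  have hchild : Ioc (P.S c k + P.scale c k / (i + 1)) (P.S c k + P.scale c k / i) ∈ P.famP := by
    exact_mod_cast P.Ioc_mem_famP hc hri (lt_add_one i)
  refine ⟨_, _, hx, hxi, ?_, hlower, hchild, P.Ioc_left_mem_famP hc hri⟩
  linarith [div_sub_div_succ_le_div_succ (P.scale_pos hc).le hi]

lemma coverEndingAt_famP_of_lt_two_pow (N : ℕ) :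
    ∀ {c : ℕ → ℕ} {k n : ℕ} {x : ℝ}, P.AdmissibleUpTo c k → P.r c k ≤ n → P.S c k < x →
      x < P.S c k + P.scale c k / n →
      P.scale c k / n < 2 ^ N * (P.S c k + P.scale c k / n - x) →
      CoverEndingAt P.famP x (P.S c k + P.scale c k / n) := by
  induction N with
  | zero =>
    intro c k n x _ _ hSx _ hN
    rw [pow_zero, one_mul] at hN
    linarith
  | succ N ih =>
    intro c k n x hc hn hSx hxt hN
    have hA := P.scale_pos hc
    have hr := P.one_le_r c k
    have hn₁ : (1 : ℝ) ≤ n := by exact_mod_cast hr.trans hn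
    obtain ⟨i, hni, hx, hxi⟩ := exists_div_succ_lt_le hSx hxt.le
    rcases hni.eq_or_lt with rfl | hni
    · -- `x` lies in the child adjacent to `t`, which is a cylinder with right end point `t`
      have ht : P.S (update c k (n + 1)) (k + 1) +
          P.scale (update c k (n + 1)) (k + 1) / P.r (update c k (n + 1)) (k + 1) =
            P.S c k + P.scale c k / n := by
        rw [← D_eq_scale_div, P.S_add_D_update_succ c k (by omega)]
      rw [← ht]
      refine ih (P.admissibleUpTo_update hc (by omega)) le_rfl ?_ (by rwa [ht]) ?_
      · rw [S_update_succ]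
        exact_mod_cast hx
      · rw [ht, ← D_eq_scale_div, D_update_succ]
        rw [pow_succ] at hN
        have := div_mul_succ_le_div_half hA.le hn₁ le_rfl
        linarith
    · have hi : (n : ℝ) + 1 ≤ i := by exact_mod_cast hni
      have hchild : Ioc (P.S c k + P.scale c k / (i + 1)) (P.S c k + P.scale c k / i) ∈ P.famP := by
        exact_mod_cast P.Ioc_mem_famP hc (hn.trans hni.le) (lt_add_one i)
      have hunion : Ioc (P.S c k + P.scale c k / (i + 1)) (P.S c k + P.scale c k / n) ∈ P.famP := by
        exact_mod_cast P.Ioc_mem_famP hc hn (by omega : n < i + 1)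
      refine ⟨_, _, hx, hxi, ?_, hchild, P.Ioc_mem_famP hc hn hni, hunion⟩
      linarith [div_sub_div_succ_le_div_sub_div hA.le hn₁ hi]

lemma coverEndingAt_famP (hc : P.AdmissibleUpTo c k) {n : ℕ} (hn : P.r c k ≤ n) {x : ℝ}
    (hSx : P.S c k < x) (hxt : x < P.S c k + P.scale c k / n) :
    CoverEndingAt P.famP x (P.S c k + P.scale c k / n) := by
  obtain ⟨N, hN⟩ := pow_unbounded_of_one_lt
    (P.scale c k / n / (P.S c k + P.scale c k / n - x)) one_lt_two
  rw [div_lt_iff₀ (by linarith)] at hN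
  exact P.coverEndingAt_famP_of_lt_two_pow N hc hn hSx hxt hN

lemma coverableByThree_famP_of_lt_two_pow (N : ℕ) {x₁ x₂ : ℝ} (h₁₂ : x₁ < x₂) :
    ∀ {c : ℕ → ℕ} {k : ℕ}, P.AdmissibleUpTo c k → P.S c k ≤ x₁ → x₂ ≤ P.S c k + P.D c k →
      P.D c k < 2 ^ N * (x₂ - x₁) → CoverableByThree P.famP x₁ x₂ := by
  induction N with
  | zero =>
    intro c k _ hSx hxD hN
    rw [pow_zero, one_mul] at hN
    linarith
  | succ N ih =>
    intro c k hc hSx hxD hN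
    have hx₂ : x₂ ∈ P.cyl c k := ⟨by linarith, hxD⟩
    have hA := P.scale_pos hc
    have hr := P.one_le_r c k
    rw [D_eq_scale_div] at hxD hN
    obtain ⟨i, hri, hx, hxi⟩ := exists_div_succ_lt_le (by linarith) hxD
    have hi : i ≠ 0 := by omega
    have hc' := P.admissibleUpTo_update hc (i := i + 1) (by omega)
    have hx₂' : x₂ ∈ P.cyl (update c k (i + 1)) (k + 1) := by
      rw [P.cyl_update_succ c k hi]
      exact ⟨hx, hxi⟩
    rcases le_or_gt (P.S c k + P.scale c k / (i + 1)) x₁ with hs | hs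
    · refine ih hc' (by rwa [S_update_succ]) (by rwa [S_add_D_update_succ _ _ _ hi]) ?_
      rw [D_update_succ]
      have := div_mul_succ_le_div_half hA.le (r := P.r c k) (i := i) (by exact_mod_cast hr)
        (by exact_mod_cast hri)
      rw [pow_succ] at hN
      linarith
    rcases hSx.eq_or_lt with rfl | hSx
    · exact (P.coverStartingAt_famP hc hx₂).coverableByThree
    have hL : CoverEndingAt P.famP x₁ (P.S c k + P.scale c k / (i + 1)) := by
      exact_mod_cast P.coverEndingAt_famP hc (n := i + 1) (by omega) hSx (by exact_mod_cast hs)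
    have hR := P.coverStartingAt_famP hc' hx₂'
    rw [S_update_succ] at hR
    exact hL.coverableByThree hR

lemma coverableByThree_famP (hc : P.AdmissibleUpTo c k) {x₁ x₂ : ℝ} (hSx : P.S c k ≤ x₁)
    (h₁₂ : x₁ < x₂) (hxD : x₂ ≤ P.S c k + P.D c k) : CoverableByThree P.famP x₁ x₂ := by
  obtain ⟨N, hN⟩ := pow_unbounded_of_one_lt (P.D c k / (x₂ - x₁)) one_lt_two
  rw [div_lt_iff₀ (by linarith)] at hN
  exact P.coverableByThree_famP_of_lt_two_pow N h₁₂ hc hSx hxD hN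

end PerronSystem

/-- Every half-open interval `U = (x₁, x₂] ⊆ (0,1]` can be covered by at most
three sets from `𝔓`, each of diameter at most `x₂ − x₁`. -/
theorem cover_Ioc_by_three_famP (P : PerronSystem) (x₁ x₂ : ℝ)
    (h₀ : 0 ≤ x₁) (h₁₂ : x₁ < x₂) (h₁ : x₂ ≤ 1) :
    ∃ U₁ U₂ U₃ : Set ℝ, U₁ ∈ P.famP ∧ U₂ ∈ P.famP ∧ U₃ ∈ P.famP ∧
      Set.Ioc x₁ x₂ ⊆ U₁ ∪ U₂ ∪ U₃ ∧
      EMetric.diam U₁ ≤ ENNReal.ofReal (x₂ - x₁) ∧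
      EMetric.diam U₂ ≤ ENNReal.ofReal (x₂ - x₁) ∧
      EMetric.diam U₃ ≤ ENNReal.ofReal (x₂ - x₁) := by
  have hS : P.S (fun _ => 0) 0 = 0 := by simp [PerronSystem.S]
  have hD : P.D (fun _ => 0) 0 = 1 := by simp [PerronSystem.D, PerronSystem.rprod, qprod]
  exact P.coverableByThree_famP (c := fun _ => 0) (fun _ h => absurd h (Nat.not_lt_zero _))
    (hS ▸ h₀) h₁₂ (by rwa [hS, hD, zero_add])
end

section
/- For every set 𝔐 of nondecreasing integer sequences with first term ≥ 2, dim_H { E'(σ(c)) : c ∈ 𝔐 } ≤ dim_H { E(c) : c ∈ 𝔐 }, where dim_H denotes the Hausdorff dimension. (Equivalently, the map T sending the classical Engel expansion with digits (c_n) to the modified Engel expansion with digits (c_n + n − 1) satisfies dim_H T(E) ≤ dim_H E for every E ⊆ (0,1].) -/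
open Filter

noncomputable section

/-- The classical Engel series `E(c) = ∑_{n≥1} 1/(c₁c₂⋯c_n)` (0-based: `c 0 = c₁`). -/
def engel (c : ℕ → ℕ) : ℝ :=
  ∑' n : ℕ, 1 / ∏ i ∈ Finset.range (n + 1), (c i : ℝ)

/-- The modified Engel series
`E'(c) = 1/c₁ + ∑_{n≥1} 1/((c₁−1)(c₂−1)⋯(c_n−1)·c_{n+1})` (0-based: `c 0 = c₁`). -/
def modEngel (c : ℕ → ℕ) : ℝ :=
  1 / (c 0 : ℝ) +
    ∑' n : ℕ, 1 / ((∏ i ∈ Finset.range (n + 1), ((c i : ℝ) - 1)) * (c (n + 1) : ℝ))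

/-- The digit shift `σ(c)_n = c_n + n − 1` (0-based: `σ(c) (n-1) = c (n-1) + (n-1)`). -/
def engelShift (c : ℕ → ℕ) : ℕ → ℕ := fun n => c n + n

/-- The Pierce series in Perron notation
`Π(c) = ∑_{n≥0} (−1)^n/((c₁−1)⋯(c_n−1)(c_{n+1}−1))` (0-based: `c 0 = c₁`). -/
def pierce (c : ℕ → ℕ) : ℝ :=
  ∑' n : ℕ, (-1 : ℝ) ^ n / ((∏ i ∈ Finset.range n, ((c i : ℝ) - 1)) * ((c n : ℝ) - 1))

/-- The traditional Pierce series `Π̃(d) = ∑_{n≥1} (−1)^{n+1}/(d₁d₂⋯d_n)` (0-based: `d 0 = d₁`). -/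
def pierceTrad (d : ℕ → ℕ) : ℝ :=
  ∑' n : ℕ, (-1 : ℝ) ^ n / ∏ i ∈ Finset.range (n + 1), (d i : ℝ)

end

/-!
With `σₙ(c)ᵢ = cᵢ + n + i` (so `σ = σ₀`) and `Tc` the tail of `c`, both series obey one-digit
recursions, `E(c) = (1 + E(Tc)) / c₀` and `E'(σₙ c) = 1/(c₀+n) + E'(σₙ₊₁ Tc) / (c₀+n-1)`, and both
are antitone for the lexicographic order. Let `c <ₗₑₓ d` first differ at position `j`. Stripping a
common digit scales the `E'`-difference by `1/(c₀+n-1)` and the `E`-difference by `1/c₀`, which is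
no smaller once `n ≥ 1`. At the first differing digit, both sequences are compared with the constant
sequence `v = d₀` at the top of the cylinder of `d`. The comparison of `d` with that top is
self-similar: either `d` leaves it at once, or the comparison passes to the tail of `d` with a
contraction factor `≤ 1/2`, so its defect is `≤ 0`. Hence `E(c) ↦ E'(σ c)` is well defined and
`4`-Lipschitz on Engel values, and Lipschitz maps do not raise Hausdorff dimension.
-/

open Finset Topology

theorem nonpos_of_le_max_zero_half {α : Type*} {S : Set α} {T : α → α} (hT : Set.MapsTo T S S)
    {f : α → ℝ} {B : ℝ} (hB : ∀ x ∈ S, f x ≤ B) (hf : ∀ x ∈ S, f x ≤ max 0 (f (T x) / 2))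
    {x : α} (hx : x ∈ S) : f x ≤ 0 := by
  have hdecay : ∀ N : ℕ, ∀ x ∈ S, f x ≤ max B 0 * (1 / 2) ^ N := by
    intro N
    induction N with
    | zero => exact fun x hx => by simpa using (hB x hx).trans (le_max_left B 0)
    | succ N ih =>
      intro x hx
      refine (hf x hx).trans (max_le (by positivity) ?_)
      rw [pow_succ]
      linarith [ih (T x) (hT hx)]
  have hlim : Tendsto (fun N : ℕ => max B 0 * (1 / 2 : ℝ) ^ N) atTop (𝓝 0) := by
    simpa using (tendsto_pow_atTop_nhds_zero_of_lt_one (by norm_num : (0 : ℝ) ≤ 1 / 2)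
      (by norm_num)).const_mul (max B 0)
  exact ge_of_tendsto' hlim fun N => hdecay N x hx

theorem summable_and_tsum_le_of_le_sub_succ {f w : ℕ → ℝ} (hf : ∀ n, 0 ≤ f n)
    (hw : ∀ n, 0 ≤ w n) (h : ∀ n, f n ≤ w n - w (n + 1)) : Summable f ∧ ∑' n, f n ≤ w 0 := by
  have hpartial : ∀ N, ∑ n ∈ range N, f n ≤ w 0 := fun N =>
    calc ∑ n ∈ range N, f n ≤ ∑ n ∈ range N, (w n - w (n + 1)) := sum_le_sum fun n _ => h n
      _ = w 0 - w N := sum_range_sub' w N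
      _ ≤ w 0 := sub_le_self _ (hw N)
  exact ⟨summable_of_sum_range_le hf hpartial, Real.tsum_le_of_sum_range_le hf hpartial⟩

theorem dimH_image_le_of_dist_le_mul {ι X Y : Type*} [MetricSpace X] [MetricSpace Y]
    {f : ι → X} {g : ι → Y} {s : Set ι} {K : NNReal}
    (h : ∀ a ∈ s, ∀ b ∈ s, dist (f a) (f b) ≤ K * dist (g a) (g b)) :
    dimH (f '' s) ≤ dimH (g '' s) := by
  rcases s.eq_empty_or_nonempty with rfl | ⟨a₀, -⟩
  · simp
  have : Nonempty ι := ⟨a₀⟩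
  set F : Y → X := f ∘ Function.invFunOn g s
  have hF : ∀ a ∈ s, F (g a) = f a := fun a ha => by
    have hex : ∃ b ∈ s, g b = g a := ⟨a, ha, rfl⟩
    have hdist := h _ (Function.invFunOn_mem hex) a ha
    rw [Function.invFunOn_eq hex, dist_self, mul_zero] at hdist
    exact dist_le_zero.mp hdist
  have himage : f '' s = F '' (g '' s) := by
    rw [Set.image_image]
    exact Set.image_congr fun a ha => (hF a ha).symm
  have hlip : LipschitzOnWith K F (g '' s) := by
    refine LipschitzOnWith.of_dist_le_mul ?_
    rintro _ ⟨a, ha, rfl⟩ _ ⟨b, hb, rfl⟩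
    rw [hF a ha, hF b hb]
    exact h a ha b hb
  rw [himage]
  exact hlip.dimH_image_le

namespace Engel

theorem one_div_sub_one_div_le_two_mul {v w n : ℝ} (hv : 2 ≤ v) (hw : v + 1 ≤ w) (hn : 1 ≤ n) :
    1 / (v + n - 1) - 1 / (w + n) ≤ 2 * (1 / (v - 1) - 1 / (w - 1)) := by
  have hlhs : 1 / (v + n - 1) - 1 / (w + n) = (w - v + 1) / ((v + n - 1) * (w + n)) := by
    field_simp [(by linarith : v + n - 1 ≠ 0), (by linarith : w + n ≠ 0)]
    ring
  have hrhs : 2 * (1 / (v - 1) - 1 / (w - 1)) = 2 * (w - v) / ((v - 1) * (w - 1)) := by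
    field_simp [(by linarith : v - 1 ≠ 0), (by linarith : w - 1 ≠ 0)]
    ring
  rw [hlhs, hrhs]
  exact div_le_div₀ (by linarith) (by linarith) (by nlinarith) (by nlinarith)

theorem one_div_sub_one_div_le {u v n : ℝ} (hu : 2 ≤ u) (huv : u + 1 ≤ v) (hn : 0 ≤ n) :
    1 / (u + n) - 1 / (v + n - 1) ≤ 1 / u - 1 / (v - 1) := by
  have hlhs : 1 / (u + n) - 1 / (v + n - 1) = (v - 1 - u) / ((u + n) * (v + n - 1)) := by
    field_simp [(by linarith : u + n ≠ 0), (by linarith : v + n - 1 ≠ 0)]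
    ring
  have hrhs : 1 / u - 1 / (v - 1) = (v - 1 - u) / (u * (v - 1)) := by
    field_simp [(by linarith : u ≠ 0), (by linarith : v - 1 ≠ 0)]
  rw [hlhs, hrhs]
  exact div_le_div_of_nonneg_left (by linarith) (by nlinarith) (by nlinarith)

def tail {α : Type*} (c : ℕ → α) : ℕ → α := fun i => c (i + 1)

section Lex

variable {α : Type*} [LT α] {c c' : ℕ → α}

theorem head_lt_or_toLex_tail_lt (h : toLex c < toLex c') :
    c 0 < c' 0 ∨ c 0 = c' 0 ∧ toLex (tail c) < toLex (tail c') := by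
  obtain ⟨k, hagree, hlt⟩ := h
  cases k with
  | zero => exact Or.inl hlt
  | succ k => exact Or.inr ⟨hagree 0 k.succ_pos, k, fun j hj => hagree (j + 1) (by omega), hlt⟩

theorem toLex_lt_induction {P : (ℕ → α) → (ℕ → α) → Prop}
    (head : ∀ c c', c 0 < c' 0 → P c c')
    (step : ∀ c c', c 0 = c' 0 → toLex (tail c) < toLex (tail c') → P (tail c) (tail c') →
      P c c')
    (h : toLex c < toLex c') : P c c' := by
  obtain ⟨k, hagree, hlt⟩ := h
  induction k generalizing c c' with
  | zero => exact head c c' hlt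
  | succ k ih =>
    have htail : toLex (tail c) < toLex (tail c') :=
      ⟨k, fun j hj => hagree (j + 1) (by omega), hlt⟩
    exact step c c' (hagree 0 k.succ_pos) htail (ih (fun j hj => hagree (j + 1) (by omega)) hlt)

end Lex

def IsEngelDigits (c : ℕ → ℕ) : Prop := Monotone c ∧ 2 ≤ c 0

def IsModEngelDigits (d : ℕ → ℕ) : Prop := StrictMono d ∧ 2 ≤ d 0

section EngelSeries

variable {c c' : ℕ → ℕ}

theorem IsEngelDigits.tail (hc : IsEngelDigits c) : IsEngelDigits (tail c) :=
  ⟨fun _ _ hij => hc.1 (Nat.succ_le_succ hij), hc.2.trans (hc.1 (Nat.zero_le 1))⟩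

theorem IsEngelDigits.head_le (hc : IsEngelDigits c) (i : ℕ) : (c 0 : ℝ) ≤ c i := by
  exact_mod_cast hc.1 (Nat.zero_le i)

theorem IsEngelDigits.two_le (hc : IsEngelDigits c) (i : ℕ) : (2 : ℝ) ≤ c i :=
  le_trans (by exact_mod_cast hc.2) (hc.head_le i)

-- The subtracted terms are the tails `∑_{k ≥ m} 1 / (c₀⋯c_k)` of sequences that stay constant
-- from position `m` on.
theorem engel_term_le_sub_succ (hc : IsEngelDigits c) (m : ℕ) :
    1 / ∏ i ∈ range (m + 1), (c i : ℝ) ≤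
      1 / ((∏ i ∈ range m, (c i : ℝ)) * (c m - 1)) -
        1 / ((∏ i ∈ range (m + 1), (c i : ℝ)) * (c (m + 1) - 1)) := by
  have hP : 0 < ∏ i ∈ range m, (c i : ℝ) := prod_pos fun i _ => by linarith [hc.two_le i]
  have ha := hc.two_le m
  have hab : (c m : ℝ) ≤ c (m + 1) := by exact_mod_cast hc.1 (Nat.le_succ m)
  rw [prod_range_succ]
  generalize ∏ i ∈ range m, (c i : ℝ) = P at hP ⊢
  generalize (c m : ℝ) = a at ha hab ⊢
  generalize (c (m + 1) : ℝ) = b at hab ⊢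
  have hgap : 1 / (P * (a - 1)) - 1 / (P * a * (b - 1)) - 1 / (P * a) =
      (b - a) / (P * a * (a - 1) * (b - 1)) := by
    field_simp [(by linarith : a - 1 ≠ 0), (by linarith : b - 1 ≠ 0)]
    ring
  have : 0 ≤ (b - a) / (P * a * (a - 1) * (b - 1)) := by
    apply div_nonneg (by linarith)
    have : 0 < a - 1 := by linarith
    have : 0 < b - 1 := by linarith
    positivity
  linarith

theorem summable_engel_term_and_engel_le (hc : IsEngelDigits c) :
    Summable (fun m => 1 / ∏ i ∈ range (m + 1), (c i : ℝ)) ∧ engel c ≤ 1 / ((c 0 : ℝ) - 1) := by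
  have h := summable_and_tsum_le_of_le_sub_succ (fun m => by positivity) (fun m => ?_)
    (engel_term_le_sub_succ hc)
  · simpa [engel] using h
  · have : (0 : ℝ) ≤ c m - 1 := by linarith [hc.two_le m]
    positivity

theorem summable_engel_term (hc : IsEngelDigits c) :
    Summable (fun m => 1 / ∏ i ∈ range (m + 1), (c i : ℝ)) :=
  (summable_engel_term_and_engel_le hc).1

theorem engel_le_one_div_sub_one (hc : IsEngelDigits c) : engel c ≤ 1 / ((c 0 : ℝ) - 1) :=
  (summable_engel_term_and_engel_le hc).2

theorem engel_nonneg (c : ℕ → ℕ) : 0 ≤ engel c :=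
  tsum_nonneg fun m => by positivity

theorem engel_eq_add_mul_tail (hc : IsEngelDigits c) :
    engel c = 1 / c 0 + 1 / c 0 * engel (tail c) := by
  rw [engel, (summable_engel_term hc).tsum_eq_zero_add, engel, ← tsum_mul_left]
  congr 1
  · simp
  · refine tsum_congr fun m => ?_
    rw [prod_range_succ' _ (m + 1), one_div_mul_one_div, mul_comm]
    rfl

theorem one_div_le_engel (hc : IsEngelDigits c) : 1 / (c 0 : ℝ) ≤ engel c := by
  rw [engel_eq_add_mul_tail hc]
  have := engel_nonneg (tail c)
  have := hc.two_le 0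
  bound

theorem engel_tail_le_one_div_sub_one (hc : IsEngelDigits c) :
    engel (tail c) ≤ 1 / ((c 0 : ℝ) - 1) := by
  have h1 : (c 0 : ℝ) ≤ tail c 0 := hc.head_le 1
  exact (engel_le_one_div_sub_one hc.tail).trans <|
    one_div_le_one_div_of_le (by linarith [hc.two_le 0]) (by linarith)

theorem engel_le_of_toLex_lt (hc : IsEngelDigits c) (hc' : IsEngelDigits c')
    (h : toLex c < toLex c') : engel c' ≤ engel c := by
  revert hc hc'
  refine toLex_lt_induction (P := fun c c' => IsEngelDigits c → IsEngelDigits c' →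
    engel c' ≤ engel c) (fun c c' h0 hc hc' => ?_) (fun c c' h0 _ ih hc hc' => ?_) h
  · have h0' : (c 0 : ℝ) + 1 ≤ c' 0 := by exact_mod_cast h0
    calc engel c' ≤ 1 / ((c' 0 : ℝ) - 1) := engel_le_one_div_sub_one hc'
      _ ≤ 1 / c 0 := one_div_le_one_div_of_le (by linarith [hc.two_le 0]) (by linarith)
      _ ≤ engel c := one_div_le_engel hc
  · rw [engel_eq_add_mul_tail hc, engel_eq_add_mul_tail hc', h0]
    have := ih hc.tail hc'.tail
    gcongr

end EngelSeries

section ModEngelSeries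

variable {d d' : ℕ → ℕ}

theorem IsModEngelDigits.tail (hd : IsModEngelDigits d) : IsModEngelDigits (tail d) :=
  ⟨fun _ _ hij => hd.1 (Nat.succ_lt_succ hij), hd.2.trans (hd.1 Nat.zero_lt_one).le⟩

theorem IsModEngelDigits.two_le (hd : IsModEngelDigits d) (i : ℕ) : (2 : ℝ) ≤ d i := by
  exact_mod_cast hd.2.trans (hd.1.monotone (Nat.zero_le i))

theorem IsModEngelDigits.add_one_le (hd : IsModEngelDigits d) (i : ℕ) :
    (d i : ℝ) + 1 ≤ d (i + 1) := by
  exact_mod_cast hd.1 (Nat.lt_succ_self i)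

theorem modEngel_term_nonneg (hd : IsModEngelDigits d) (m : ℕ) :
    0 ≤ 1 / ((∏ i ∈ range (m + 1), ((d i : ℝ) - 1)) * d (m + 1)) := by
  have : 0 ≤ ∏ i ∈ range (m + 1), ((d i : ℝ) - 1) :=
    prod_nonneg fun i _ => by linarith [hd.two_le i]
  positivity

-- The subtracted terms are the tails of the modified series of sequences that increase by exactly
-- one from position `m` on.
theorem modEngel_term_le_sub_succ (hd : IsModEngelDigits d) (m : ℕ) :
    1 / ((∏ i ∈ range (m + 1), ((d i : ℝ) - 1)) * d (m + 1)) ≤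
      1 / ((∏ i ∈ range (m + 1), ((d i : ℝ) - 1)) * d m) -
        1 / ((∏ i ∈ range (m + 2), ((d i : ℝ) - 1)) * d (m + 1)) := by
  have hP : 0 < ∏ i ∈ range (m + 1), ((d i : ℝ) - 1) :=
    prod_pos fun i _ => by linarith [hd.two_le i]
  have ha := hd.two_le m
  have hab := hd.add_one_le m
  rw [prod_range_succ _ (m + 1)]
  generalize ∏ i ∈ range (m + 1), ((d i : ℝ) - 1) = P at hP ⊢
  generalize (d m : ℝ) = a at ha hab ⊢
  generalize (d (m + 1) : ℝ) = b at hab ⊢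
  have hgap : 1 / (P * a) - 1 / (P * (b - 1) * b) - 1 / (P * b) =
      (b - 1 - a) / (P * a * (b - 1)) := by
    field_simp [(by linarith : b - 1 ≠ 0), (by linarith : b ≠ 0), (by linarith : a ≠ 0)]
    ring
  have : 0 ≤ (b - 1 - a) / (P * a * (b - 1)) := by
    apply div_nonneg (by linarith)
    have : 0 < b - 1 := by linarith
    positivity
  linarith

theorem summable_modEngel_term_and_modEngel_le (hd : IsModEngelDigits d) :
    Summable (fun m => 1 / ((∏ i ∈ range (m + 1), ((d i : ℝ) - 1)) * d (m + 1))) ∧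
      modEngel d ≤ 1 / ((d 0 : ℝ) - 1) := by
  have hw (m : ℕ) : 0 ≤ 1 / ((∏ i ∈ range (m + 1), ((d i : ℝ) - 1)) * d m) := by
    have : 0 ≤ ∏ i ∈ range (m + 1), ((d i : ℝ) - 1) :=
      prod_nonneg fun i _ => by linarith [hd.two_le i]
    positivity
  obtain ⟨hsum, hle⟩ := summable_and_tsum_le_of_le_sub_succ (modEngel_term_nonneg hd) hw
    (modEngel_term_le_sub_succ hd)
  refine ⟨hsum, ?_⟩
  have h0 := hd.two_le 0
  have hsplit : 1 / (d 0 : ℝ) + 1 / ((d 0 - 1) * d 0) = 1 / (d 0 - 1) := by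
    field_simp [(by linarith : (d 0 : ℝ) - 1 ≠ 0)]
    ring
  rw [modEngel, ← hsplit]
  simpa using hle

theorem summable_modEngel_term (hd : IsModEngelDigits d) :
    Summable (fun m => 1 / ((∏ i ∈ range (m + 1), ((d i : ℝ) - 1)) * d (m + 1))) :=
  (summable_modEngel_term_and_modEngel_le hd).1

theorem modEngel_le_one_div_sub_one (hd : IsModEngelDigits d) :
    modEngel d ≤ 1 / ((d 0 : ℝ) - 1) :=
  (summable_modEngel_term_and_modEngel_le hd).2

theorem one_div_le_modEngel (hd : IsModEngelDigits d) : 1 / (d 0 : ℝ) ≤ modEngel d :=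
  le_add_of_nonneg_right (tsum_nonneg (modEngel_term_nonneg hd))

theorem modEngel_eq_add_mul_tail (hd : IsModEngelDigits d) :
    modEngel d = 1 / d 0 + 1 / ((d 0 : ℝ) - 1) * modEngel (tail d) := by
  rw [modEngel, (summable_modEngel_term hd).tsum_eq_zero_add, modEngel, mul_add,
    ← tsum_mul_left]
  congr 2
  · simp [tail, mul_comm]
  · refine tsum_congr fun m => ?_
    rw [prod_range_succ' _ (m + 1), one_div_mul_one_div, mul_comm _ ((d 0 : ℝ) - 1), mul_assoc]
    rfl

theorem modEngel_le_of_toLex_lt (hd : IsModEngelDigits d) (hd' : IsModEngelDigits d')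
    (h : toLex d < toLex d') : modEngel d' ≤ modEngel d := by
  revert hd hd'
  refine toLex_lt_induction (P := fun d d' => IsModEngelDigits d → IsModEngelDigits d' →
    modEngel d' ≤ modEngel d) (fun d d' h0 hd hd' => ?_) (fun d d' h0 _ ih hd hd' => ?_) h
  · have h0' : (d 0 : ℝ) + 1 ≤ d' 0 := by exact_mod_cast h0
    calc modEngel d' ≤ 1 / ((d' 0 : ℝ) - 1) := modEngel_le_one_div_sub_one hd'
      _ ≤ 1 / d 0 := one_div_le_one_div_of_le (by linarith [hd.two_le 0]) (by linarith)
      _ ≤ modEngel d := one_div_le_modEngel hd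
  · rw [modEngel_eq_add_mul_tail hd, modEngel_eq_add_mul_tail hd', h0]
    have := ih hd.tail hd'.tail
    have := hd'.two_le 0
    gcongr
    exact one_div_nonneg.mpr (by linarith)

end ModEngelSeries

def shiftFrom (n : ℕ) (c : ℕ → ℕ) : ℕ → ℕ := fun i => c i + n + i

section Shift

variable {c c' : ℕ → ℕ}

@[simp]
theorem shiftFrom_apply_zero (n : ℕ) (c : ℕ → ℕ) : shiftFrom n c 0 = c 0 + n := rfl

theorem shiftFrom_zero (c : ℕ → ℕ) : shiftFrom 0 c = engelShift c :=
  funext fun i => by simp [shiftFrom, engelShift]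

theorem tail_shiftFrom (n : ℕ) (c : ℕ → ℕ) : tail (shiftFrom n c) = shiftFrom (n + 1) (tail c) :=
  funext fun i => by simp only [tail, shiftFrom]; omega

theorem IsEngelDigits.shiftFrom (hc : IsEngelDigits c) (n : ℕ) :
    IsModEngelDigits (shiftFrom n c) := by
  refine ⟨strictMono_nat_of_lt_succ fun i => ?_, ?_⟩
  · have : c i ≤ c (i + 1) := hc.1 (Nat.le_succ i)
    simp only [Engel.shiftFrom]
    omega
  · have := hc.2
    simp only [shiftFrom_apply_zero]
    omega

theorem toLex_shiftFrom_lt (h : toLex c < toLex c') (n : ℕ) :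
    toLex (shiftFrom n c) < toLex (shiftFrom n c') := by
  obtain ⟨k, hagree, hlt⟩ := h
  refine ⟨k, fun j hj => congrArg (· + n + j) (hagree j hj), ?_⟩
  have : c k < c' k := hlt
  show c k + n + k < c' k + n + k
  omega

theorem modEngel_shiftFrom_eq (hc : IsEngelDigits c) (n : ℕ) :
    modEngel (shiftFrom n c) =
      1 / ((c 0 : ℝ) + n) + 1 / ((c 0 : ℝ) + n - 1) * modEngel (shiftFrom (n + 1) (tail c)) := by
  rw [modEngel_eq_add_mul_tail (hc.shiftFrom n), tail_shiftFrom]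
  push_cast [shiftFrom_apply_zero]
  rfl

theorem modEngel_shiftFrom_succ_le_engel (hc : IsEngelDigits c) (n : ℕ) :
    modEngel (shiftFrom (n + 1) c) ≤ engel c := by
  have h0 := hc.two_le 0
  calc modEngel (shiftFrom (n + 1) c) ≤ 1 / ((shiftFrom (n + 1) c 0 : ℝ) - 1) :=
        modEngel_le_one_div_sub_one (hc.shiftFrom _)
    _ ≤ 1 / c 0 := by
        push_cast [shiftFrom_apply_zero]
        exact one_div_le_one_div_of_le (by linarith) (by linarith [Nat.cast_nonneg (α := ℝ) n])
    _ ≤ engel c := one_div_le_engel hc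

theorem modEngel_shiftFrom_le (hc : IsEngelDigits c) (n : ℕ) :
    modEngel (shiftFrom n c) ≤ 1 / ((c 0 : ℝ) + n) + 1 / ((c 0 : ℝ) + n - 1) * engel (tail c) := by
  have : (0 : ℝ) ≤ 1 / ((c 0 : ℝ) + n - 1) :=
    one_div_nonneg.mpr (by linarith [hc.two_le 0, Nat.cast_nonneg (α := ℝ) n])
  rw [modEngel_shiftFrom_eq hc]
  gcongr
  exact modEngel_shiftFrom_succ_le_engel hc.tail n

end Shift

-- `1 / (v + n - 1)` and `1 / (v - 1)` are the values of `modEngel (shiftFrom n fun _ => v)` and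
-- `engel fun _ => v` at the top of the cylinder of sequences starting with `v`.
noncomputable def topDefect (v n : ℕ) (c : ℕ → ℕ) : ℝ :=
  (1 / ((v : ℝ) + n - 1) - modEngel (shiftFrom n c)) - 2 * (1 / ((v : ℝ) - 1) - engel c)

section Comparison

variable {v n : ℕ} {c c' : ℕ → ℕ}

theorem topDefect_nonpos_of_lt (hv : 2 ≤ v) (hn : 1 ≤ n) (hc : IsEngelDigits c)
    (hvc : v < c 0) : topDefect v n c ≤ 0 := by
  have hM := one_div_le_modEngel (hc.shiftFrom n)
  have hE := engel_le_one_div_sub_one hc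
  have hnum := one_div_sub_one_div_le_two_mul (v := v) (w := c 0) (n := n) (by exact_mod_cast hv)
    (by exact_mod_cast hvc) (by exact_mod_cast hn)
  push_cast [shiftFrom_apply_zero] at hM
  rw [topDefect]
  linarith

theorem topDefect_le_max_zero_half (hv : 2 ≤ v) (hn : 1 ≤ n) (hc : IsEngelDigits c)
    (hvc : v ≤ c 0) : topDefect v n c ≤ max 0 (topDefect v (n + 1) (tail c) / 2) := by
  rcases hvc.lt_or_eq with hlt | rfl
  · exact (topDefect_nonpos_of_lt hv hn hc hlt).trans (le_max_left _ _)
  have hu := hc.two_le 0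
  have hn' : (1 : ℝ) ≤ n := by exact_mod_cast hn
  have hY : 0 ≤ 1 / ((c 0 : ℝ) - 1) - engel (tail c) := by
    linarith [engel_tail_le_one_div_sub_one hc]
  have hcur : topDefect (c 0) n c =
      1 / ((c 0 : ℝ) + n - 1) * (1 / ((c 0 : ℝ) + n) - modEngel (shiftFrom (n + 1) (tail c))) -
        2 / c 0 * (1 / ((c 0 : ℝ) - 1) - engel (tail c)) := by
    rw [topDefect, modEngel_shiftFrom_eq hc, engel_eq_add_mul_tail hc]
    field_simp [(by linarith : (c 0 : ℝ) + n - 1 ≠ 0), (by linarith : (c 0 : ℝ) - 1 ≠ 0)]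
    ring
  have hnext : topDefect (c 0) (n + 1) (tail c) =
      (1 / ((c 0 : ℝ) + n) - modEngel (shiftFrom (n + 1) (tail c))) -
        2 * (1 / ((c 0 : ℝ) - 1) - engel (tail c)) := by
    rw [topDefect]
    push_cast
    ring_nf
  rw [hcur, hnext]
  set a := 1 / ((c 0 : ℝ) + n - 1)
  set X := 1 / ((c 0 : ℝ) + n) - modEngel (shiftFrom (n + 1) (tail c))
  set Y := 1 / ((c 0 : ℝ) - 1) - engel (tail c)
  have ha0 : 0 < a := one_div_pos.mpr (by linarith)
  have ha1 : a ≤ 1 / c 0 := one_div_le_one_div_of_le (by linarith) (by linarith)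
  have ha2 : a ≤ 1 / 2 := one_div_le_one_div_of_le (by norm_num) (by linarith)
  calc a * X - 2 / c 0 * Y ≤ a * (X - 2 * Y) := by
        have : a * Y ≤ 1 / c 0 * Y := mul_le_mul_of_nonneg_right ha1 hY
        have : 2 / (c 0 : ℝ) * Y = 2 * (1 / c 0 * Y) := by ring
        linarith
    _ ≤ max 0 ((X - 2 * Y) / 2) := by
        rcases le_total (X - 2 * Y) 0 with h | h
        · exact (mul_nonpos_of_nonneg_of_nonpos ha0.le h).trans (le_max_left _ _)
        · exact le_max_of_le_right (by nlinarith)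

theorem topDefect_nonpos (hv : 2 ≤ v) (hn : 1 ≤ n) (hc : IsEngelDigits c) (hvc : v ≤ c 0) :
    topDefect v n c ≤ 0 := by
  let S : Set (ℕ × (ℕ → ℕ)) := {p | 1 ≤ p.1 ∧ IsEngelDigits p.2 ∧ v ≤ p.2 0}
  have hS : Set.MapsTo (fun p : ℕ × (ℕ → ℕ) => (p.1 + 1, tail p.2)) S S :=
    fun p ⟨_, hc, hvc⟩ => ⟨Nat.le_add_left 1 p.1, hc.tail, hvc.trans (hc.1 (Nat.zero_le 1))⟩
  have hbound : ∀ p ∈ S, topDefect v p.1 p.2 ≤ 1 := by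
    rintro ⟨n, c⟩ ⟨hn, hc, hvc⟩
    have hv' : (2 : ℝ) ≤ v := by exact_mod_cast hv
    have hn' : (1 : ℝ) ≤ n := by exact_mod_cast hn
    have hvc' : (v : ℝ) ≤ c 0 := by exact_mod_cast hvc
    have hM := one_div_le_modEngel (hc.shiftFrom n)
    have hE := engel_le_one_div_sub_one hc
    have h1 : 1 / ((v : ℝ) + n - 1) ≤ 1 := by rw [div_le_one (by linarith)]; linarith
    have h2 : 1 / ((c 0 : ℝ) - 1) ≤ 1 / ((v : ℝ) - 1) :=
      one_div_le_one_div_of_le (by linarith) (by linarith)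
    have h3 : (0 : ℝ) ≤ 1 / ((shiftFrom n c 0 : ℕ) : ℝ) := by positivity
    rw [topDefect]
    linarith
  exact nonpos_of_le_max_zero_half hS hbound
    (fun p ⟨hn, hc, hvc⟩ => topDefect_le_max_zero_half hv hn hc hvc) (x := (n, c)) ⟨hn, hc, hvc⟩

theorem modEngel_shiftFrom_sub_le (hn : 1 ≤ n) (hc : IsEngelDigits c) (hc' : IsEngelDigits c')
    (h : toLex c < toLex c') :
    modEngel (shiftFrom n c) - modEngel (shiftFrom n c') ≤ 2 * (engel c - engel c') := by
  revert n hc hc'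
  refine toLex_lt_induction (P := fun c c' => ∀ {n}, 1 ≤ n → IsEngelDigits c →
    IsEngelDigits c' → modEngel (shiftFrom n c) - modEngel (shiftFrom n c') ≤
      2 * (engel c - engel c')) (fun c c' h0 n hn hc hc' => ?_)
    (fun c c' h0 htail ih n hn hc hc' => ?_) h
  · have hu := hc.two_le 0
    have hn' : (1 : ℝ) ≤ n := by exact_mod_cast hn
    have huv : (c 0 : ℝ) + 1 ≤ c' 0 := by exact_mod_cast h0
    have hM := modEngel_shiftFrom_le hc n
    have hTop := topDefect_nonpos hc'.2 hn hc' le_rfl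
    have hE := engel_eq_add_mul_tail hc
    have hE' := engel_nonneg (tail c)
    have hnum := one_div_sub_one_div_le hu huv (by linarith : (0 : ℝ) ≤ n)
    have h1 : 1 / ((c 0 : ℝ) + n - 1) * engel (tail c) ≤ 1 / c 0 * engel (tail c) :=
      mul_le_mul_of_nonneg_right (one_div_le_one_div_of_le (by linarith) (by linarith)) hE'
    have h2 : 1 / ((c' 0 : ℝ) - 1) ≤ 1 / c 0 := one_div_le_one_div_of_le (by linarith) (by linarith)
    have h3 : 0 ≤ 1 / (c 0 : ℝ) * engel (tail c) := by positivity
    rw [topDefect] at hTop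
    linarith
  · have hu := hc.two_le 0
    have hn' : (1 : ℝ) ≤ n := by exact_mod_cast hn
    have hdiff := ih (by omega : 1 ≤ n + 1) hc.tail hc'.tail
    have hE := engel_le_of_toLex_lt hc.tail hc'.tail htail
    have ha : 0 ≤ 1 / ((c 0 : ℝ) + n - 1) := one_div_nonneg.mpr (by linarith)
    have ha' : 1 / ((c 0 : ℝ) + n - 1) ≤ 1 / c 0 :=
      one_div_le_one_div_of_le (by linarith) (by linarith)
    rw [modEngel_shiftFrom_eq hc, modEngel_shiftFrom_eq hc', engel_eq_add_mul_tail hc,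
      engel_eq_add_mul_tail hc', h0]
    rw [h0] at ha ha'
    calc _ = 1 / ((c' 0 : ℝ) + n - 1) * (modEngel (shiftFrom (n + 1) (tail c)) -
          modEngel (shiftFrom (n + 1) (tail c'))) := by ring
      _ ≤ 1 / ((c' 0 : ℝ) + n - 1) * (2 * (engel (tail c) - engel (tail c'))) :=
          mul_le_mul_of_nonneg_left hdiff ha
      _ ≤ 1 / (c' 0 : ℝ) * (2 * (engel (tail c) - engel (tail c'))) :=
          mul_le_mul_of_nonneg_right ha' (by linarith)
      _ = _ := by ring

theorem one_div_sub_modEngel_engelShift_le (hc : IsEngelDigits c) :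
    1 / ((c 0 : ℝ) - 1) - modEngel (engelShift c) ≤ 4 * (1 / ((c 0 : ℝ) - 1) - engel c) := by
  have hu := hc.two_le 0
  have hTop := topDefect_nonpos hc.2 le_rfl hc.tail (hc.1 (Nat.zero_le 1))
  have hY := engel_tail_le_one_div_sub_one hc
  rw [topDefect] at hTop
  push_cast at hTop
  have hTop' : 1 / (c 0 : ℝ) - modEngel (shiftFrom 1 (tail c)) ≤
      2 * (1 / ((c 0 : ℝ) - 1) - engel (tail c)) := by
    rw [add_sub_cancel_right] at hTop
    linarith
  rw [← shiftFrom_zero, modEngel_shiftFrom_eq hc, engel_eq_add_mul_tail hc]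
  have ha : 1 / ((c 0 : ℝ) - 1) ≤ 2 / c 0 := by
    rw [div_le_div_iff₀ (by linarith) (by linarith)]
    linarith
  calc _ = 1 / ((c 0 : ℝ) - 1) * (1 / c 0 - modEngel (shiftFrom (0 + 1) (tail c))) := by
        field_simp [(by linarith : (c 0 : ℝ) - 1 ≠ 0)]
        ring
    _ ≤ 1 / ((c 0 : ℝ) - 1) * (2 * (1 / ((c 0 : ℝ) - 1) - engel (tail c))) :=
        mul_le_mul_of_nonneg_left hTop' (one_div_nonneg.mpr (by linarith))
    _ ≤ 2 / c 0 * (2 * (1 / ((c 0 : ℝ) - 1) - engel (tail c))) :=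
        mul_le_mul_of_nonneg_right ha (by linarith)
    _ = _ := by
        field_simp [(by linarith : (c 0 : ℝ) - 1 ≠ 0)]
        ring

theorem modEngel_engelShift_sub_le (hc : IsEngelDigits c) (hc' : IsEngelDigits c')
    (h : toLex c < toLex c') :
    modEngel (engelShift c) - modEngel (engelShift c') ≤ 4 * (engel c - engel c') := by
  have hu := hc.two_le 0
  have ha : 1 / ((c 0 : ℝ) - 1) ≤ 2 / c 0 := by
    rw [div_le_div_iff₀ (by linarith) (by linarith)]
    linarith
  rcases head_lt_or_toLex_tail_lt h with h0 | ⟨h0, htail⟩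
  · have huv : (c 0 : ℝ) + 1 ≤ c' 0 := by exact_mod_cast h0
    have hM := modEngel_shiftFrom_le hc 0
    have hTop := one_div_sub_modEngel_engelShift_le hc'
    have hE := engel_eq_add_mul_tail hc
    have hE' := engel_nonneg (tail c)
    have h1 : 1 / ((c 0 : ℝ) - 1) * engel (tail c) ≤ 2 / c 0 * engel (tail c) :=
      mul_le_mul_of_nonneg_right ha hE'
    have h2 : 1 / ((c' 0 : ℝ) - 1) ≤ 1 / c 0 := one_div_le_one_div_of_le (by linarith) (by linarith)
    have h3 : 0 ≤ 1 / (c 0 : ℝ) * engel (tail c) := by positivity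
    have h4 : 2 / (c 0 : ℝ) * engel (tail c) = 2 * (1 / c 0 * engel (tail c)) := by ring
    rw [shiftFrom_zero] at hM
    push_cast at hM
    simp only [add_zero] at hM
    linarith
  · have hdiff := modEngel_shiftFrom_sub_le le_rfl hc.tail hc'.tail htail
    have hE := engel_le_of_toLex_lt hc.tail hc'.tail htail
    rw [← shiftFrom_zero, ← shiftFrom_zero, modEngel_shiftFrom_eq hc, modEngel_shiftFrom_eq hc',
      engel_eq_add_mul_tail hc, engel_eq_add_mul_tail hc', h0]
    rw [h0] at ha hu
    push_cast
    simp only [add_zero]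
    calc _ = 1 / ((c' 0 : ℝ) - 1) * (modEngel (shiftFrom 1 (tail c)) -
          modEngel (shiftFrom 1 (tail c'))) := by ring
      _ ≤ 1 / ((c' 0 : ℝ) - 1) * (2 * (engel (tail c) - engel (tail c'))) :=
          mul_le_mul_of_nonneg_left hdiff (one_div_nonneg.mpr (by linarith))
      _ ≤ 2 / (c' 0 : ℝ) * (2 * (engel (tail c) - engel (tail c'))) :=
          mul_le_mul_of_nonneg_right ha (by linarith)
      _ = _ := by ring

theorem dist_modEngel_engelShift_le (hc : IsEngelDigits c) (hc' : IsEngelDigits c') :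
    dist (modEngel (engelShift c)) (modEngel (engelShift c')) ≤ 4 * dist (engel c) (engel c') := by
  wlog h : toLex c ≤ toLex c' generalizing c c'
  · rw [dist_comm, dist_comm (engel c)]
    exact this hc' hc (le_of_not_ge h)
  rcases h.lt_or_eq with h | h
  · have hM := modEngel_le_of_toLex_lt (hc.shiftFrom 0) (hc'.shiftFrom 0) (toLex_shiftFrom_lt h 0)
    have hE := engel_le_of_toLex_lt hc hc' h
    rw [shiftFrom_zero, shiftFrom_zero] at hM
    rw [Real.dist_eq, Real.dist_eq, abs_of_nonneg (by linarith), abs_of_nonneg (by linarith)]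
    exact modEngel_engelShift_sub_le hc hc' h
  · obtain rfl : c = c' := toLex.injective h
    simp

end Comparison

end Engel

/-- For every set `𝔐` of nondecreasing digit sequences with first term `≥ 2`,
`dim_H {E'(σ(c)) : c ∈ 𝔐} ≤ dim_H {E(c) : c ∈ 𝔐}`. -/
theorem dimH_modEngel_le_dimH_engel (𝔐 : Set (ℕ → ℕ))
    (h𝔐 : ∀ c ∈ 𝔐, Monotone c ∧ 2 ≤ c 0) :
    dimH {x : ℝ | ∃ c ∈ 𝔐, x = modEngel (engelShift c)} ≤
      dimH {x : ℝ | ∃ c ∈ 𝔐, x = engel c} := by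
  have himage (f : (ℕ → ℕ) → ℝ) : {x : ℝ | ∃ c ∈ 𝔐, x = f c} = f '' 𝔐 := by
    ext
    simp [eq_comm]
  rw [himage (fun c => modEngel (engelShift c)), himage engel]
  exact dimH_image_le_of_dist_le_mul (K := 4) fun c hc c' hc' =>
    Engel.dist_modEngel_engelShift_le (h𝔐 c hc) (h𝔐 c' hc')
end

section
/- (Fractal quasi-equivalence principle for the Pierce expansion in the Perron and traditional notations.) Let ψ : ℕ → (0,∞) satisfy ∑_{n=1}^{∞} 1/ψ(n) < ∞, and let 𝔐 be a set of strictly increasing integer sequences such that every a ∈ 𝔐 satisfies a₁ ≥ 2 and a_n ≥ ψ(n) for all sufficiently large n. Then dim_H { Π(a) : a ∈ 𝔐 } = dim_H { Π(a + 1) : a ∈ 𝔐 }, where (a+1)_n = a_n + 1 and dim_H denotes the Hausdorff dimension. (The first set consists of the irrationals whose Pierce digits in Perron notation form a sequence in 𝔐, the second of the irrationals whose Pierce digits in traditional notation form a sequence in 𝔐.) -/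
open Filter

/-!
If admissible digit sequences `a ≠ b` first differ at index `n`, then `|Π(a) − Π(b)|` and
`|Π(a+1) − Π(b+1)|` are the corresponding differences of the tails after `n` digits, divided by
`∏_{i<n} (aᵢ − 1)` and `∏_{i<n} aᵢ` respectively, and these products differ by a factor between
`1` and `n + 1`. For tails with distinct first digits the two differences agree up to a factor `12`,
because `1/a₀ ≤ Π(a) ≤ 1/(a₀ − 1)`. Hence `Π(a) ↦ Π(a+1)` is `1`-Lipschitz, and since
`|Π(a+1) − Π(b+1)| ≤ 2⁻ⁿ`, the factor `n + 1` costs only an arbitrarily small loss of exponent: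
the inverse map is Hölder of every exponent `r < 1`. Both kinds of maps control Hausdorff dimension.
-/

open scoped NNReal

structure IsPierceDigits (a : ℕ → ℕ) : Prop where
  strictMono : StrictMono a
  two_le : 2 ≤ a 0

def digitTail (a : ℕ → ℕ) (n : ℕ) : ℕ → ℕ := fun m => a (m + n)

noncomputable def pierceDenom (a : ℕ → ℕ) (n : ℕ) : ℝ :=
  ∏ i ∈ Finset.range n, ((a i : ℝ) - 1)

namespace IsPierceDigits

variable {a : ℕ → ℕ}

theorem add_two_le (ha : IsPierceDigits a) (n : ℕ) : n + 2 ≤ a n := by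
  induction n with
  | zero => exact ha.two_le
  | succ n ih => have := ha.strictMono (Nat.lt_add_one n); omega

theorem add_one_le_digit (ha : IsPierceDigits a) (n : ℕ) : (n : ℝ) + 1 ≤ (a n : ℝ) - 1 := by
  have : ((n + 2 : ℕ) : ℝ) ≤ a n := by exact_mod_cast ha.add_two_le n
  push_cast at this
  linarith

theorem cast_le_succ_sub_one (ha : IsPierceDigits a) (n : ℕ) :
    (a n : ℝ) ≤ (a (n + 1) : ℝ) - 1 := by
  have : ((a n + 1 : ℕ) : ℝ) ≤ a (n + 1) := by exact_mod_cast ha.strictMono (Nat.lt_add_one n)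
  push_cast at this
  linarith

theorem digit_pos (ha : IsPierceDigits a) (n : ℕ) : 0 < (a n : ℝ) - 1 := by
  linarith [ha.add_one_le_digit n, (n.cast_nonneg : (0 : ℝ) ≤ n)]

theorem add_one (ha : IsPierceDigits a) : IsPierceDigits (a + 1) where
  strictMono := fun _ _ h => Nat.add_lt_add_right (ha.strictMono h) 1
  two_le := le_trans ha.two_le (Nat.le_succ _)

theorem tail (ha : IsPierceDigits a) (n : ℕ) : IsPierceDigits (digitTail a n) where
  strictMono := fun _ _ h => ha.strictMono (Nat.add_lt_add_right h n)
  two_le := le_trans ha.two_le (ha.strictMono.monotone (Nat.zero_le _))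

end IsPierceDigits

section pierceDenom

variable {a : ℕ → ℕ}

theorem pierceDenom_succ (a : ℕ → ℕ) (n : ℕ) :
    pierceDenom a (n + 1) = pierceDenom a n * ((a n : ℝ) - 1) :=
  Finset.prod_range_succ _ _

theorem pierceDenom_succ' (a : ℕ → ℕ) (n : ℕ) :
    pierceDenom a (n + 1) = ((a 0 : ℝ) - 1) * pierceDenom (digitTail a 1) n := by
  rw [pierceDenom, Finset.prod_range_succ', mul_comm]
  rfl

theorem pierceDenom_pos (ha : IsPierceDigits a) (n : ℕ) : 0 < pierceDenom a n :=
  Finset.prod_pos fun i _ => ha.digit_pos i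

theorem pow_le_pierceDenom {c : ℝ} (hc : 0 ≤ c) (h : ∀ i, c ≤ (a i : ℝ) - 1) (n : ℕ) :
    c ^ n ≤ pierceDenom a n := by
  simpa [pierceDenom] using
    Finset.prod_le_prod (s := Finset.range n) (fun _ _ => hc) (fun i _ => h i)

theorem two_pow_le_pierceDenom_add_one (ha : IsPierceDigits a) (n : ℕ) :
    (2 : ℝ) ^ n ≤ pierceDenom (a + 1) n := by
  refine pow_le_pierceDenom zero_le_two (fun i => ?_) n
  have := ha.add_one_le_digit i
  simp only [Pi.add_apply, Pi.one_apply, Nat.cast_add, Nat.cast_one]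
  linarith [(i.cast_nonneg : (0 : ℝ) ≤ i)]

theorem two_pow_le_pierceDenom_succ (ha : IsPierceDigits a) (n : ℕ) :
    (2 : ℝ) ^ n ≤ pierceDenom a (n + 1) := by
  have htail : (2 : ℝ) ^ n ≤ pierceDenom (digitTail a 1) n := by
    refine pow_le_pierceDenom zero_le_two (fun i => ?_) n
    have := ha.add_one_le_digit (i + 1)
    push_cast at this
    show 2 ≤ (a (i + 1) : ℝ) - 1
    linarith [(i.cast_nonneg : (0 : ℝ) ≤ i)]
  rw [pierceDenom_succ']
  nlinarith [ha.add_one_le_digit 0, pow_pos (two_pos (α := ℝ)) n]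

theorem pierceDenom_le_pierceDenom_add_one (ha : IsPierceDigits a) (n : ℕ) :
    pierceDenom a n ≤ pierceDenom (a + 1) n :=
  Finset.prod_le_prod (fun i _ => (ha.digit_pos i).le) (fun i _ => by simp)

theorem pierceDenom_add_one_le (ha : IsPierceDigits a) (n : ℕ) :
    pierceDenom (a + 1) n ≤ (n + 1) * pierceDenom a n := by
  induction n with
  | zero => simp [pierceDenom]
  | succ n ih =>
    have hd := ha.add_one_le_digit n
    have hQ := pierceDenom_pos ha n
    rw [pierceDenom_succ, pierceDenom_succ, Pi.add_apply, Pi.one_apply]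
    push_cast
    calc pierceDenom (a + 1) n * ((a n : ℝ) + 1 - 1)
        ≤ (n + 1) * pierceDenom a n * ((a n : ℝ) + 1 - 1) := by gcongr; linarith
      _ ≤ (n + 1 + 1) * (pierceDenom a n * ((a n : ℝ) - 1)) := by nlinarith

end pierceDenom

section pierce

variable {a : ℕ → ℕ}

theorem pierce_eq_tsum (a : ℕ → ℕ) :
    pierce a = ∑' n, (-1 : ℝ) ^ n * (pierceDenom a (n + 1))⁻¹ := by
  simp only [pierce, pierceDenom_succ, div_eq_mul_inv]
  rfl

theorem summable_inv_pierceDenom (ha : IsPierceDigits a) :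
    Summable fun n => (pierceDenom a (n + 1))⁻¹ := by
  refine (summable_geometric_two).of_nonneg_of_le (fun n => (inv_pos.2 (pierceDenom_pos ha _)).le)
    fun n => ?_
  rw [one_div, inv_pow]
  exact inv_anti₀ (by positivity) (two_pow_le_pierceDenom_succ ha n)

theorem pierce_le_inv (ha : IsPierceDigits a) : pierce a ≤ ((a 0 : ℝ) - 1)⁻¹ := by
  have hanti : Antitone fun n => (pierceDenom a (n + 1))⁻¹ := by
    refine antitone_nat_of_succ_le fun n => inv_anti₀ (pierceDenom_pos ha _) ?_
    rw [pierceDenom_succ _ (n + 1)]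
    nlinarith [pierceDenom_pos ha (n + 1), ha.add_one_le_digit (n + 1),
      (n.cast_nonneg : (0 : ℝ) ≤ n)]
  have := alternating_series_error_bound _ hanti (summable_inv_pierceDenom ha) 0
  rw [← pierce_eq_tsum, Finset.sum_range_zero, sub_zero] at this
  simpa [pierceDenom] using (le_abs_self _).trans this

theorem pierce_eq_one_sub_pierce_tail_div (ha : IsPierceDigits a) :
    pierce a = (1 - pierce (digitTail a 1)) / ((a 0 : ℝ) - 1) := by
  rw [pierce_eq_tsum, (summable_inv_pierceDenom ha).alternating.tsum_eq_zero_add,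
    pierce_eq_tsum]
  have hterm : ∀ n : ℕ, (-1 : ℝ) ^ (n + 1) * (pierceDenom a (n + 1 + 1))⁻¹
      = -((a 0 : ℝ) - 1)⁻¹ * ((-1 : ℝ) ^ n * (pierceDenom (digitTail a 1) (n + 1))⁻¹) := by
    intro n
    rw [pierceDenom_succ' a (n + 1), mul_inv, pow_succ]
    ring
  have hfirst : pierceDenom a 1 = (a 0 : ℝ) - 1 := by simp [pierceDenom]
  rw [tsum_congr hterm, tsum_mul_left, pow_zero, one_mul, zero_add, hfirst]
  ring

theorem inv_le_pierce (ha : IsPierceDigits a) : (a 0 : ℝ)⁻¹ ≤ pierce a := by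
  have htail := pierce_le_inv (ha.tail 1)
  have h1 := ha.cast_le_succ_sub_one 0
  have hd := ha.digit_pos 0
  change pierce (digitTail a 1) ≤ ((a 1 : ℝ) - 1)⁻¹ at htail
  rw [pierce_eq_one_sub_pierce_tail_div ha, le_div_iff₀ hd]
  have : ((a 1 : ℝ) - 1)⁻¹ ≤ (a 0 : ℝ)⁻¹ := inv_anti₀ (by linarith) (by linarith)
  have h0 : (a 0 : ℝ) ≠ 0 := by linarith
  have : (a 0 : ℝ)⁻¹ * ((a 0 : ℝ) - 1) = 1 - (a 0 : ℝ)⁻¹ := by field_simp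
  linarith

theorem pierce_nonneg (ha : IsPierceDigits a) : 0 ≤ pierce a :=
  le_trans (inv_nonneg.2 (Nat.cast_nonneg _)) (inv_le_pierce ha)

end pierce

def Comparable (K u v : ℝ) : Prop := 0 ≤ v ∧ v ≤ u ∧ u ≤ K * v

namespace Comparable

variable {K L u v u' v' : ℝ}

theorem mono (h : Comparable K u v) (hKL : K ≤ L) : Comparable L u v :=
  ⟨h.1, h.2.1, h.2.2.trans (mul_le_mul_of_nonneg_right hKL h.1)⟩

theorem add (h : Comparable K u v) (h' : Comparable K u' v') : Comparable K (u + u') (v + v') :=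
  ⟨add_nonneg h.1 h'.1, add_le_add h.2.1 h'.2.1, by rw [mul_add]; exact add_le_add h.2.2 h'.2.2⟩

theorem div {p q m : ℝ} (h : Comparable K u v) (hp : 0 < p) (hpq : p ≤ q) (hqm : q ≤ m * p) :
    Comparable (m * K) (u / p) (v / q) := by
  obtain ⟨hv, hvu, huv⟩ := h
  have hq : 0 < q := hp.trans_le hpq
  refine ⟨div_nonneg hv hq.le, (div_le_div_of_nonneg_right hvu hp.le).trans' ?_, ?_⟩
  · exact div_le_div_of_nonneg_left hv hp hpq
  · have hKv : 0 ≤ K * v := hv.trans (hvu.trans huv)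
    calc u / p ≤ K * v / p := div_le_div_of_nonneg_right huv hp.le
      _ ≤ m * K * v / q := by
        rw [div_le_div_iff₀ hp hq]
        nlinarith [mul_le_mul_of_nonneg_left hqm hKv]
      _ = m * K * (v / q) := mul_div_assoc _ _ _

theorem abs (h : Comparable K u v) : Comparable K |u| |v| := by
  rwa [abs_of_nonneg h.1, abs_of_nonneg (h.1.trans h.2.1)]

end Comparable

section comparable

variable {a b : ℕ → ℕ}

theorem pierce_add_one_eq (ha : IsPierceDigits a) :
    pierce (a + 1) = (1 - pierce (digitTail a 1 + 1)) / (a 0 : ℝ) := by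
  rw [pierce_eq_one_sub_pierce_tail_div ha.add_one]
  simp only [Pi.add_apply, Pi.one_apply, Nat.cast_add, Nat.cast_one, add_sub_cancel_right]
  rfl

theorem comparable_pierce_add_one (ha : IsPierceDigits a) :
    Comparable 3 (pierce a) (pierce (a + 1)) := by
  have hupper := pierce_le_inv ha
  have hupper' := pierce_le_inv ha.add_one
  have hlower := inv_le_pierce ha
  have hlower' := inv_le_pierce ha.add_one
  simp only [Pi.add_apply, Pi.one_apply, Nat.cast_add, Nat.cast_one, add_sub_cancel_right]
    at hupper' hlower'
  have h2 : (2 : ℝ) ≤ a 0 := by exact_mod_cast ha.two_le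
  have h3 : ((a 0 : ℝ) - 1)⁻¹ ≤ 3 * ((a 0 : ℝ) + 1)⁻¹ := by
    rw [← div_eq_mul_inv, inv_eq_one_div, div_le_div_iff₀ (by linarith) (by linarith)]
    linarith
  refine ⟨pierce_nonneg ha.add_one, hupper'.trans hlower, ?_⟩
  linarith

theorem comparable_inv_sub_pierce (ha : IsPierceDigits a) {k : ℝ} (hk : 1 ≤ k)
    (hka : k ≤ (a 0 : ℝ) - 1) :
    Comparable 6 (k⁻¹ - pierce a) ((k + 1)⁻¹ - pierce (a + 1)) := by
  set e : ℝ := (a 0 : ℝ) - 1 with he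
  have he1 : 1 ≤ e := hk.trans hka
  have hgap : Comparable 6 ((e - k) / (k * e)) ((e - k) / ((k + 1) * (e + 1))) := by
    have h := Comparable.div (K := 1) ⟨sub_nonneg.2 hka, le_rfl, (one_mul _).ge⟩
      (p := k * e) (q := (k + 1) * (e + 1)) (m := 4) (by positivity) (by nlinarith) (by nlinarith)
    exact h.mono (by norm_num)
  have htail : Comparable 6 (pierce (digitTail a 1) / e) (pierce (digitTail a 1 + 1) / (e + 1)) :=
    (comparable_pierce_add_one (ha.tail 1)).div (m := 2) (by linarith) (by linarith)
      (by linarith) |>.mono (by norm_num)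
  convert hgap.add htail using 1
  · rw [pierce_eq_one_sub_pierce_tail_div ha, ← he]
    field_simp
    ring
  · rw [pierce_add_one_eq ha, show (a 0 : ℝ) = e + 1 by rw [he]; ring]
    field_simp
    ring

theorem comparable_pierce_sub_of_lt (ha : IsPierceDigits a) (hb : IsPierceDigits b)
    (hab : a 0 < b 0) :
    Comparable 12 (pierce a - pierce b) (pierce (a + 1) - pierce (b + 1)) := by
  have ha2 : (2 : ℝ) ≤ a 0 := by exact_mod_cast ha.two_le
  have hab' : (a 0 : ℝ) ≤ (b 0 : ℝ) - 1 := by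
    have : ((a 0 + 1 : ℕ) : ℝ) ≤ b 0 := by exact_mod_cast hab
    push_cast at this
    linarith
  -- Split at `1 / a₀`: `Π(a) − Π(b) = (1/a₀ − Π(a₁, a₂, …))/(a₀ − 1) + (1/a₀ − Π(b))`, with both
  -- summands nonnegative; likewise for `a + 1`, `b + 1` at `1/(a₀ + 1)`.
  have hfirst := (comparable_inv_sub_pierce (ha.tail 1) (by linarith)
    (ha.cast_le_succ_sub_one 0)).div (p := (a 0 : ℝ) - 1) (q := a 0) (m := 2) (by linarith)
    (by linarith) (by linarith)
  have hsecond := comparable_inv_sub_pierce hb (by linarith) hab'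
  have hne : (a 0 : ℝ) - 1 ≠ 0 := by linarith
  convert hfirst.add (hsecond.mono (by norm_num : (6 : ℝ) ≤ 2 * 6)) using 1
  · norm_num
  · rw [pierce_eq_one_sub_pierce_tail_div ha]
    field_simp
    ring
  · rw [pierce_add_one_eq ha]
    field_simp
    ring

end comparable

section difference

variable {a b : ℕ → ℕ}

theorem pierce_le_one (ha : IsPierceDigits a) : pierce a ≤ 1 :=
  (pierce_le_inv ha).trans (inv_le_one_of_one_le₀ (by linarith [ha.add_one_le_digit 0]))

theorem abs_pierce_sub_le_one (ha : IsPierceDigits a) (hb : IsPierceDigits b) :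
    |pierce a - pierce b| ≤ 1 := by
  rw [abs_sub_le_iff]
  constructor <;> linarith [pierce_le_one ha, pierce_le_one hb, pierce_nonneg ha, pierce_nonneg hb]

theorem abs_pierce_sub_eq_div (n : ℕ) (ha : IsPierceDigits a) (hb : IsPierceDigits b)
    (hab : ∀ i < n, a i = b i) :
    |pierce a - pierce b|
      = |pierce (digitTail a n) - pierce (digitTail b n)| / pierceDenom a n := by
  induction n generalizing a b with
  | zero =>
    rw [pierceDenom, Finset.prod_range_zero, div_one]
    rfl
  | succ n ih =>
    have h0 : (a 0 : ℝ) = b 0 := by rw [hab 0 n.succ_pos]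
    have hstep : |pierce a - pierce b|
        = |pierce (digitTail a 1) - pierce (digitTail b 1)| / ((a 0 : ℝ) - 1) := by
      rw [pierce_eq_one_sub_pierce_tail_div ha, pierce_eq_one_sub_pierce_tail_div hb, ← h0,
        ← sub_div, abs_div, abs_of_pos (ha.digit_pos 0), sub_sub_sub_cancel_left, abs_sub_comm]
    rw [hstep, ih (ha.tail 1) (hb.tail 1) fun i hi => hab (i + 1) (by omega), div_div,
      mul_comm, ← pierceDenom_succ']
    rfl

theorem comparable_abs_pierce_sub_of_ne (ha : IsPierceDigits a) (hb : IsPierceDigits b)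
    (hab : a 0 ≠ b 0) :
    Comparable 12 |pierce a - pierce b| |pierce (a + 1) - pierce (b + 1)| := by
  rcases hab.lt_or_gt with h | h
  · exact (comparable_pierce_sub_of_lt ha hb h).abs
  · rw [abs_sub_comm, abs_sub_comm (pierce (a + 1))]
    exact (comparable_pierce_sub_of_lt hb ha h).abs

theorem exists_comparable_abs_pierce_sub (ha : IsPierceDigits a) (hb : IsPierceDigits b)
    (hab : a ≠ b) :
    ∃ n : ℕ, Comparable ((n + 1) * 12) |pierce a - pierce b| |pierce (a + 1) - pierce (b + 1)| ∧
      |pierce (a + 1) - pierce (b + 1)| ≤ (2 ^ n)⁻¹ := by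
  have hex : ∃ n, a n ≠ b n := Function.ne_iff.1 hab
  classical
  set n := Nat.find hex
  have hagree : ∀ i < n, a i = b i := fun i hi => not_not.1 (Nat.find_min hex hi)
  have hagree' : ∀ i < n, (a + 1) i = (b + 1) i := fun i hi => by simp [hagree i hi]
  have htail := comparable_abs_pierce_sub_of_ne (ha.tail n) (hb.tail n)
    (by simpa only [digitTail, zero_add] using Nat.find_spec hex)
  refine ⟨n, ?_, ?_⟩
  · rw [abs_pierce_sub_eq_div n ha hb hagree,
      abs_pierce_sub_eq_div n ha.add_one hb.add_one hagree']
    exact htail.div (pierceDenom_pos ha n) (pierceDenom_le_pierceDenom_add_one ha n)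
      (pierceDenom_add_one_le ha n)
  · rw [abs_pierce_sub_eq_div n ha.add_one hb.add_one hagree', div_eq_mul_inv, ← one_mul (2 ^ n)⁻¹]
    exact mul_le_mul (abs_pierce_sub_le_one (ha.tail n).add_one (hb.tail n).add_one)
      (inv_anti₀ (by positivity) (two_pow_le_pierceDenom_add_one ha n))
      (inv_nonneg.2 (pierceDenom_pos ha.add_one n).le) zero_le_one

end difference

theorem abs_pierce_add_one_sub_le {a b : ℕ → ℕ} (ha : IsPierceDigits a) (hb : IsPierceDigits b) :
    |pierce (a + 1) - pierce (b + 1)| ≤ |pierce a - pierce b| := by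
  rcases eq_or_ne a b with rfl | hab
  · simp
  · obtain ⟨n, hcomp, -⟩ := exists_comparable_abs_pierce_sub ha hb hab
    exact hcomp.2.1

theorem exists_add_one_mul_pow_le {q : ℝ} (hq0 : 0 ≤ q) (hq1 : q < 1) :
    ∃ C : ℝ, ∀ n : ℕ, (n + 1) * q ^ n ≤ C := by
  have hlim : Tendsto (fun n : ℕ => (n + 1) * q ^ n) atTop (nhds 0) := by
    simpa [add_mul] using (tendsto_self_mul_const_pow_of_lt_one hq0 hq1).add
      (tendsto_pow_atTop_nhds_zero_of_lt_one hq0 hq1)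
  obtain ⟨C, hC⟩ := hlim.bddAbove_range
  exact ⟨C, fun n => hC ⟨n, rfl⟩⟩

theorem exists_abs_pierce_sub_le_rpow {r : ℝ} (hr : r < 1) :
    ∃ C : ℝ≥0, ∀ a b : ℕ → ℕ, IsPierceDigits a → IsPierceDigits b →
      |pierce a - pierce b| ≤ C * |pierce (a + 1) - pierce (b + 1)| ^ r := by
  have hq1 : (2⁻¹ : ℝ) ^ (1 - r) < 1 := Real.rpow_lt_one (by norm_num) (by norm_num) (by linarith)
  obtain ⟨C, hC⟩ := exists_add_one_mul_pow_le (Real.rpow_nonneg (by norm_num) _) hq1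
  refine ⟨(12 * C).toNNReal, fun a b ha hb => ?_⟩
  rcases eq_or_ne a b with rfl | hab
  · simp only [sub_self, abs_zero]
    positivity
  obtain ⟨n, hcomp, hsmall⟩ := exists_comparable_abs_pierce_sub ha hb hab
  set δ := |pierce (a + 1) - pierce (b + 1)|
  have hδ : δ ^ (1 - r) ≤ ((2⁻¹ : ℝ) ^ (1 - r)) ^ n := by
    rw [Real.rpow_pow_comm (by norm_num), inv_pow]
    exact Real.rpow_le_rpow (abs_nonneg _) hsmall (by linarith)
  calc |pierce a - pierce b| ≤ (n + 1) * 12 * δ := hcomp.2.2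
    _ = (n + 1) * 12 * (δ ^ (1 - r) * δ ^ r) := by
      rw [← Real.rpow_add' (abs_nonneg _) (by norm_num), sub_add_cancel, Real.rpow_one]
    _ = 12 * ((n + 1) * δ ^ (1 - r)) * δ ^ r := by ring
    _ ≤ 12 * ((n + 1) * ((2⁻¹ : ℝ) ^ (1 - r)) ^ n) * δ ^ r := by gcongr
    _ ≤ (12 * C).toNNReal * δ ^ r := by
      gcongr
      exact (mul_le_mul_of_nonneg_left (hC n) (by norm_num)).trans (Real.le_coe_toNNReal _)

section dimension

variable {α X Y : Type*} [MetricSpace X] [MetricSpace Y] {f : α → X} {g : α → Y} {s : Set α}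

theorem dimH_image_le_div_of_dist_le {C r : ℝ≥0} (hr : 0 < r)
    (h : ∀ a ∈ s, ∀ b ∈ s, dist (g a) (g b) ≤ C * dist (f a) (f b) ^ (r : ℝ)) :
    dimH (g '' s) ≤ dimH (f '' s) / r := by
  rcases s.eq_empty_or_nonempty with rfl | ⟨a₀, -⟩
  · simp
  have : Nonempty α := ⟨a₀⟩
  set F := g ∘ Function.invFunOn f s
  have hF : ∀ a ∈ s, F (f a) = g a := by
    intro a ha
    obtain ⟨ha', hfa'⟩ := Function.invFunOn_pos (f := f) ⟨a, ha, rfl⟩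
    have := h _ ha' a ha
    rw [hfa', dist_self, Real.zero_rpow (NNReal.coe_ne_zero.2 hr.ne'), mul_zero] at this
    exact dist_le_zero.1 this
  have hHolder : HolderOnWith C r F (f '' s) := by
    rintro _ ⟨a, ha, rfl⟩ _ ⟨b, hb, rfl⟩
    rw [hF a ha, hF b hb, edist_dist, edist_dist,
      ENNReal.ofReal_rpow_of_nonneg dist_nonneg r.coe_nonneg, ← ENNReal.ofReal_coe_nnreal,
      ← ENNReal.ofReal_mul C.coe_nonneg]
    exact ENNReal.ofReal_le_ofReal (h a ha b hb)
  rw [← Set.image_congr hF, ← Set.image_image]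
  exact hHolder.dimH_image_le hr

theorem dimH_image_le_of_forall_dist_le_rpow
    (h : ∀ r : ℝ≥0, 0 < r → r < 1 →
      ∃ C : ℝ≥0, ∀ a ∈ s, ∀ b ∈ s, dist (g a) (g b) ≤ C * dist (f a) (f b) ^ (r : ℝ)) :
    dimH (g '' s) ≤ dimH (f '' s) := by
  refine ENNReal.le_of_forall_lt_one_mul_le fun r hr => ?_
  lift r to ℝ≥0 using hr.ne_top
  rcases eq_or_ne r 0 with rfl | hr0
  · simp
  obtain ⟨C, hC⟩ := h r (pos_iff_ne_zero.2 hr0) (by exact_mod_cast hr)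
  have := dimH_image_le_div_of_dist_le (pos_iff_ne_zero.2 hr0) hC
  rwa [ENNReal.le_div_iff_mul_le (Or.inl (by exact_mod_cast hr0)) (Or.inl ENNReal.coe_ne_top),
    mul_comm] at this

end dimension

theorem fractal_quasi_equivalence_pierce_general (ψ : ℕ → ℝ)
    (𝔐 : Set (ℕ → ℕ))
    (h𝔐 : ∀ a ∈ 𝔐, StrictMono a ∧ 2 ≤ a 0 ∧ ∀ᶠ n in atTop, ψ n ≤ (a n : ℝ)) :
    dimH {x : ℝ | ∃ a ∈ 𝔐, x = pierce a} =
      dimH {x : ℝ | ∃ a ∈ 𝔐, x = pierce fun n => a n + 1} := by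
  have hdigits : ∀ a ∈ 𝔐, IsPierceDigits a := fun a ha => ⟨(h𝔐 a ha).1, (h𝔐 a ha).2.1⟩
  have hE : {x : ℝ | ∃ a ∈ 𝔐, x = pierce a} = pierce '' 𝔐 := by
    ext
    simp only [Set.mem_ofPred_eq, Set.mem_image, eq_comm]
  have hE' : {x : ℝ | ∃ a ∈ 𝔐, x = pierce fun n => a n + 1} = (fun a => pierce (a + 1)) '' 𝔐 := by
    ext
    simp only [Set.mem_ofPred_eq, Set.mem_image, eq_comm]
    rfl
  rw [hE, hE']
  refine le_antisymm (dimH_image_le_of_forall_dist_le_rpow fun r _ hr => ?_) ?_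
  · obtain ⟨C, hC⟩ := exists_abs_pierce_sub_le_rpow (r := r) (by exact_mod_cast hr)
    exact ⟨C, fun a ha b hb => hC a b (hdigits a ha) (hdigits b hb)⟩
  · simpa using dimH_image_le_div_of_dist_le (C := 1) (r := 1) one_pos fun a ha b hb => by
      simpa [Real.dist_eq] using abs_pierce_add_one_sub_le (hdigits a ha) (hdigits b hb)

/-- Fractal quasi-equivalence principle for the Pierce expansion in the Perron
and traditional notations: if `∑ 1/ψ(n) < ∞` and every `a ∈ 𝔐` is strictly increasing with
`a₁ ≥ 2` and `a_n ≥ ψ(n)` for all sufficiently large `n`, then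
`dim_H {Π(a) : a ∈ 𝔐} = dim_H {Π(a+1) : a ∈ 𝔐}`. -/
theorem fractal_quasi_equivalence_pierce (ψ : ℕ → ℝ) (hψpos : ∀ n, 0 < ψ n)
    (hψsum : Summable fun n : ℕ => 1 / ψ n)
    (𝔐 : Set (ℕ → ℕ))
    (h𝔐 : ∀ a ∈ 𝔐, StrictMono a ∧ 2 ≤ a 0 ∧ ∀ᶠ n in atTop, ψ n ≤ (a n : ℝ)) :
    dimH {x : ℝ | ∃ a ∈ 𝔐, x = pierce a} =
      dimH {x : ℝ | ∃ a ∈ 𝔐, x = pierce fun n => a n + 1} :=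
  fractal_quasi_equivalence_pierce_general ψ 𝔐 h𝔐
end
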